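/- arXiv:2407.04979 — 10 statements merged into one kernel-verified Lean document; each statement's English description precedes it below -/
import Mathlib

section
/- Let p ∈ ℝ with p ∉ {−(k+1)/2 : k ∈ ℕ₀}, let P be a real 2×2 matrix, ψ ∈ ℝ, and let (A,B) = Ξₚ(P,ψ). Then A and B have no common zeros: for every z ∈ ℂ, A(z) ≠ 0 or B(z) ≠ 0. -/
open Matrix MeasureTheory Filter

noncomputable section

def matJ : Matrix (Fin 2) (Fin 2) ℝ := !![0, -1; 1, 0]

def Dpsi (p ψ a : ℝ) : Matrix (Fin 2) (Fin 2) ℝ :=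
  if p = 0 then !![1, 0; ψ * Real.log a, 1]
  else !![1, 0; ψ / (2 * p), 1] * !![a ^ p, 0; 0, a ^ (-p)] * !![1, 0; -ψ / (2 * p), 1]

def HPpsi (p ψ : ℝ) (P : Matrix (Fin 2) (Fin 2) ℝ) (a : ℝ) : Matrix (Fin 2) (Fin 2) ℝ :=
  Dpsi p ψ a * P * (Dpsi p ψ a)ᵀ

def SatRec (p : ℝ) (P : Matrix (Fin 2) (Fin 2) ℝ) (ψ : ℝ) (α β : ℕ → ℝ) : Prop :=
  α 0 = 1 ∧ β 0 = 0 ∧ ∀ n : ℕ,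
    !![α (n + 1), β (n + 1)] =
      (-1 / (((n : ℝ) + 1) * (2 * p + (n : ℝ) + 1))) •
        (!![α n, β n] * (P * matJ * !![2 * p + (n : ℝ) + 1, 0; ψ, (n : ℝ) + 1]))

def genF (c : ℕ → ℝ) (z : ℂ) : ℂ := ∑' n : ℕ, (c n : ℂ) * z ^ n

def rowAB (p ψ : ℝ) (α β : ℕ → ℝ) (a : ℝ) (z : ℂ) : Matrix (Fin 1) (Fin 2) ℂ :=
  !![((a ^ p : ℝ) : ℂ) * genF α ((a : ℂ) * z), ((a ^ p : ℝ) : ℂ) * genF β ((a : ℂ) * z)] *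
    ((Dpsi p ψ a)⁻¹).map Complex.ofReal

/-!
Comparing coefficients in the recurrence shows that `(A, B)` solves the linear system
`z A' = ψ B - z (P₀₁ A + P₁₁ B)`, `z B' + 2p B = z (P₀₀ A + P₁₀ B)`, which is regular away
from `z = 0`. A common zero `z₀` is not `0`, because `A 0 = 1`. Near `z₀` a solution of a regular
linear system that vanishes at `z₀` vanishes identically: otherwise it is `(z - z₀) ^ n • g z`
with `n ≥ 1` and `g z₀ ≠ 0`, and the system forces `n • g z = (z - z₀) • (L z (g z) - g' z)`,
which is false at `z₀`. By the identity theorem `A` is then identically zero.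
-/

open FormalMultilinearSeries Topology

section PowerSeries

variable {𝕜 : Type*} [RCLike 𝕜] {c : ℕ → 𝕜} {F : 𝕜 → 𝕜}

theorem hasFPowerSeriesOnBall_ofScalars_of_hasSum
    (hF : ∀ z, HasSum (fun n => c n * z ^ n) (F z)) :
    HasFPowerSeriesOnBall F (ofScalars 𝕜 c) 0 ⊤ where
  r_le := by
    refine (ENNReal.eq_top_of_forall_nnreal_le fun r =>
      (ofScalars 𝕜 c).le_radius_of_tendsto (l := 0) ?_).ge
    simpa [ofScalars_norm, norm_mul, norm_pow] using
      ((hF ((r : ℝ) : 𝕜)).summable.tendsto_atTop_zero).norm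
  r_pos := by simp
  hasSum {z} _ := by simpa [ofScalars_apply_eq, mul_comm] using hF z

theorem analyticOnNhd_of_hasSum (hF : ∀ z, HasSum (fun n => c n * z ^ n) (F z)) :
    AnalyticOnNhd 𝕜 F Set.univ := by
  simpa using (hasFPowerSeriesOnBall_ofScalars_of_hasSum hF).analyticOnNhd

theorem hasSum_mul_deriv_of_hasSum (hF : ∀ z, HasSum (fun n => c n * z ^ n) (F z)) (z : 𝕜) :
    HasSum (fun n => (n + 1) * c (n + 1) * z ^ (n + 1)) (z * deriv F z) := by
  have h := ((hasFPowerSeriesOnBall_ofScalars_of_hasSum hF).fderiv.hasSum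
    (y := z) (by simp)).mapL (ContinuousLinearMap.apply 𝕜 𝕜 (1 : 𝕜))
  simp only [ContinuousLinearMap.apply_apply, zero_add, fderiv_apply_one_eq_deriv,
    apply_eq_pow_smul_coeff, _root_.smul_apply, derivSeries_coeff_one,
    coeff_ofScalars, nsmul_eq_mul, smul_eq_mul, Nat.cast_add, Nat.cast_one] at h
  exact (h.mul_left z).congr_fun fun n => by ring

end PowerSeries

theorem AnalyticAt.eventually_eq_zero_of_hasDerivAt_clm {𝕜 E : Type*} [NontriviallyNormedField 𝕜]
    [CharZero 𝕜] [NormedAddCommGroup E] [NormedSpace 𝕜 E] [CompleteSpace E]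
    {F : 𝕜 → E} {L : 𝕜 → E →L[𝕜] E} {z₀ : 𝕜} (hF : AnalyticAt 𝕜 F z₀) (hL : ContinuousAt L z₀)
    (hF₀ : F z₀ = 0) (hode : ∀ᶠ z in 𝓝 z₀, HasDerivAt F (L z (F z)) z) :
    ∀ᶠ z in 𝓝 z₀, F z = 0 := by
  by_contra hne
  obtain ⟨n, g, hg, hg₀, hFg⟩ := hF.exists_eventuallyEq_pow_smul_nonzero_iff.mpr hne
  obtain ⟨m, rfl⟩ : ∃ m, n = m + 1 := Nat.exists_eq_succ_of_ne_zero <| by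
    rintro rfl
    exact hg₀ (by simpa [hF₀] using hFg.self_of_nhds.symm)
  have hderiv : ∀ᶠ z in 𝓝 z₀, HasDerivAt F
      (((m + 1 : 𝕜) * (z - z₀) ^ m) • g z + (z - z₀) ^ (m + 1) • deriv g z) z := by
    filter_upwards [hFg.eventually_nhds, hg.eventually_analyticAt] with z hFz hgz
    have hpow := ((hasDerivAt_id' z).sub_const z₀).pow (m + 1)
    simp only [Nat.add_sub_cancel, mul_one, Nat.cast_add, Nat.cast_one] at hpow
    convert (hpow.smul hgz.differentiableAt.hasDerivAt).congr_of_eventuallyEq hFz using 1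
    exact add_comm _ _
  have hkey : (fun z => (m + 1 : 𝕜) • g z) =ᶠ[𝓝[≠] z₀]
      fun z => (z - z₀) • (L z (g z) - deriv g z) := by
    filter_upwards [nhdsWithin_le_nhds (hderiv.and (hode.and hFg)), self_mem_nhdsWithin]
      with z ⟨hd, hodez, hFz⟩ hz
    have h := hd.unique hodez
    rw [hFz, map_smul] at h
    apply smul_right_injective E (pow_ne_zero m (sub_ne_zero.mpr hz))
    linear_combination (norm := module) h
  have hcont : ContinuousAt (fun z => (z - z₀) • (L z (g z) - deriv g z)) z₀ := by
    have hLg := hL.clm_apply hg.continuousAt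
    have hg' := hg.deriv.continuousAt
    fun_prop
  have h := ((hg.continuousAt.const_smul (m + 1 : 𝕜)).eventuallyEq_nhds_iff_eventuallyEq_nhdsNE
    hcont |>.mp hkey).eq_of_nhds
  simp only [Pi.smul_apply, sub_self, zero_smul, smul_eq_zero, hg₀, or_false] at h
  exact Nat.cast_add_one_ne_zero m h

namespace SatRec

variable {p ψ : ℝ} {P : Matrix (Fin 2) (Fin 2) ℝ} {α β : ℕ → ℝ}

theorem beta_succ (h : SatRec p P ψ α β) {n : ℕ} (hn : 2 * p + n + 1 ≠ 0) :
    (2 * p + n + 1) * β (n + 1) = P 0 0 * α n + P 1 0 * β n := by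
  have h1 := congrFun (congrFun (h.2.2 n) 0) 1
  simp only [matJ, Matrix.smul_apply, Matrix.mul_apply, Fin.sum_univ_two, of_apply, cons_val',
    cons_val_zero, cons_val_one, cons_val_fin_one, smul_eq_mul] at h1
  field_simp at h1
  apply mul_left_cancel₀ (n.cast_add_one_ne_zero : (n + 1 : ℝ) ≠ 0)
  linear_combination h1

theorem alpha_succ (h : SatRec p P ψ α β) {n : ℕ} (hn : 2 * p + n + 1 ≠ 0) :
    (n + 1) * α (n + 1) = ψ * β (n + 1) - (P 0 1 * α n + P 1 1 * β n) := by
  have h0 := congrFun (congrFun (h.2.2 n) 0) 0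
  simp only [matJ, Matrix.smul_apply, Matrix.mul_apply, Fin.sum_univ_two, of_apply, cons_val',
    cons_val_zero, cons_val_one, cons_val_fin_one, smul_eq_mul] at h0
  field_simp at h0
  apply mul_left_cancel₀ hn
  linear_combination h0 - ψ * h.beta_succ hn

theorem mul_deriv_fst (h : SatRec p P ψ α β) (hp : ∀ n : ℕ, 2 * p + n + 1 ≠ 0) {A B : ℂ → ℂ}
    (hA : ∀ z : ℂ, HasSum (fun n : ℕ => (α n : ℂ) * z ^ n) (A z))
    (hB : ∀ z : ℂ, HasSum (fun n : ℕ => (β n : ℂ) * z ^ n) (B z)) (z : ℂ) :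
    z * deriv A z = ψ * B z - z * (P 0 1 * A z + P 1 1 * B z) := by
  have hB' : HasSum (fun n => (β (n + 1) : ℂ) * z ^ (n + 1)) (B z) := by
    simpa [h.2.1] using (hasSum_nat_add_iff' 1).mpr (hB z)
  have hrhs := (((hA z).mul_left (P 0 1 : ℂ)).add ((hB z).mul_left (P 1 1 : ℂ))).mul_left z
  refine (hasSum_mul_deriv_of_hasSum (c := fun n => (α n : ℂ)) hA z).unique ?_
  refine ((hB'.mul_left (ψ : ℂ)).sub hrhs).congr_fun fun n => ?_
  have hn := congrArg (fun x : ℝ => (x : ℂ)) (h.alpha_succ (hp n))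
  push_cast at hn
  linear_combination z ^ (n + 1) * hn

theorem mul_deriv_snd (h : SatRec p P ψ α β) (hp : ∀ n : ℕ, 2 * p + n + 1 ≠ 0) {A B : ℂ → ℂ}
    (hA : ∀ z : ℂ, HasSum (fun n : ℕ => (α n : ℂ) * z ^ n) (A z))
    (hB : ∀ z : ℂ, HasSum (fun n : ℕ => (β n : ℂ) * z ^ n) (B z)) (z : ℂ) :
    z * deriv B z + 2 * p * B z = z * (P 0 0 * A z + P 1 0 * B z) := by
  have hB' : HasSum (fun n => (β (n + 1) : ℂ) * z ^ (n + 1)) (B z) := by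
    simpa [h.2.1] using (hasSum_nat_add_iff' 1).mpr (hB z)
  have hrhs := (((hA z).mul_left (P 0 0 : ℂ)).add ((hB z).mul_left (P 1 0 : ℂ))).mul_left z
  refine ((hasSum_mul_deriv_of_hasSum (c := fun n => (β n : ℂ)) hB z).add
    (hB'.mul_left (2 * (p : ℂ)))).unique (hrhs.congr_fun fun n => ?_)
  have hn := congrArg (fun x : ℝ => (x : ℂ)) (h.beta_succ (hp n))
  push_cast at hn
  linear_combination z ^ (n + 1) * hn

end SatRec

/-- The system of the header, divided by `z`: `(A, B)' = xiCoeff p ψ P z (A, B)`. -/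
def xiCoeff (p ψ : ℝ) (P : Matrix (Fin 2) (Fin 2) ℝ) (z : ℂ) : ℂ × ℂ →L[ℂ] ℂ × ℂ :=
  ((-(P 0 1 : ℂ)) • ContinuousLinearMap.fst ℂ ℂ ℂ
      + (ψ / z - P 1 1) • ContinuousLinearMap.snd ℂ ℂ ℂ).prod
    ((P 0 0 : ℂ) • ContinuousLinearMap.fst ℂ ℂ ℂ
      + (P 1 0 - 2 * p / z) • ContinuousLinearMap.snd ℂ ℂ ℂ)

theorem continuousAt_xiCoeff (p ψ : ℝ) (P : Matrix (Fin 2) (Fin 2) ℝ) {z : ℂ} (hz : z ≠ 0) :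
    ContinuousAt (xiCoeff p ψ P) z := by
  have hcont : ContinuousAt (fun z : ℂ =>
      ((-(P 0 1 : ℂ)) • ContinuousLinearMap.fst ℂ ℂ ℂ
          + (ψ / z - P 1 1) • ContinuousLinearMap.snd ℂ ℂ ℂ,
        (P 0 0 : ℂ) • ContinuousLinearMap.fst ℂ ℂ ℂ
          + (P 1 0 - 2 * p / z) • ContinuousLinearMap.snd ℂ ℂ ℂ)) z := by
    fun_prop (disch := exact hz)
  exact (ContinuousLinearMap.prodₗᵢ ℂ).continuous.continuousAt.comp hcont

theorem SatRec.hasDerivAt_xiCoeff {p ψ : ℝ} {P : Matrix (Fin 2) (Fin 2) ℝ} {α β : ℕ → ℝ}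
    (h : SatRec p P ψ α β) (hp : ∀ n : ℕ, 2 * p + n + 1 ≠ 0) {A B : ℂ → ℂ}
    (hA : ∀ z : ℂ, HasSum (fun n : ℕ => (α n : ℂ) * z ^ n) (A z))
    (hB : ∀ z : ℂ, HasSum (fun n : ℕ => (β n : ℂ) * z ^ n) (B z)) {z : ℂ} (hz : z ≠ 0) :
    HasDerivAt (fun w => (A w, B w)) (xiCoeff p ψ P z (A z, B z)) z := by
  have hdA := (analyticOnNhd_of_hasSum hA z trivial).differentiableAt.hasDerivAt
  have hdB := (analyticOnNhd_of_hasSum hB z trivial).differentiableAt.hasDerivAt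
  convert hdA.prodMk hdB using 1
  have hfst := h.mul_deriv_fst hp hA hB z
  have hsnd := h.mul_deriv_snd hp hA hB z
  ext <;>
    simp only [xiCoeff, ContinuousLinearMap.prod_apply, _root_.add_apply, _root_.smul_apply,
      ContinuousLinearMap.coe_fst', ContinuousLinearMap.coe_snd', smul_eq_mul] <;>
    field_simp
  · linear_combination -hfst
  · linear_combination -hsnd

/-- the generating functions (A,B) = Ξₚ(P,ψ) have no common zeros. -/
theorem statement1 (p : ℝ) (hp : ∀ k : ℕ, p ≠ -((k : ℝ) + 1) / 2)
    (P : Matrix (Fin 2) (Fin 2) ℝ) (ψ : ℝ) (α β : ℕ → ℝ)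
    (hrec : SatRec p P ψ α β)
    (A B : ℂ → ℂ)
    (hA : ∀ z : ℂ, HasSum (fun n : ℕ => (α n : ℂ) * z ^ n) (A z))
    (hB : ∀ z : ℂ, HasSum (fun n : ℕ => (β n : ℂ) * z ^ n) (B z)) :
    ∀ z : ℂ, A z ≠ 0 ∨ B z ≠ 0 := by
  have hp' : ∀ n : ℕ, 2 * p + n + 1 ≠ 0 := fun n h => hp n (by linarith)
  have hA₀ : A 0 = 1 := by
    simpa [hrec.1] using (hA 0).unique (hasSum_single 0 fun n hn => by simp [hn])
  intro z₀
  by_contra! hz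
  have hz₀ : z₀ ≠ 0 := by
    rintro rfl
    simp [hA₀] at hz
  have hAB : ∀ᶠ z in 𝓝 z₀, (A z, B z) = 0 :=
    ((analyticOnNhd_of_hasSum hA z₀ trivial).prod (analyticOnNhd_of_hasSum hB z₀ trivial))
      |>.eventually_eq_zero_of_hasDerivAt_clm (continuousAt_xiCoeff p ψ P hz₀)
        (Prod.ext hz.1 hz.2)
        ((eventually_ne_nhds hz₀).mono fun z hz => hrec.hasDerivAt_xiCoeff hp' hA hB hz)
  have hA_zero := (analyticOnNhd_of_hasSum hA).eqOn_zero_of_preconnected_of_eventuallyEq_zero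
    isPreconnected_univ (Set.mem_univ z₀) (hAB.mono fun z hz => congrArg Prod.fst hz)
  simpa [hA₀] using hA_zero (Set.mem_univ 0)

end
end

section
/- Let p > −1/2, let P be a real 2×2 matrix, ψ ∈ ℝ, and let (A,B) = Ξₚ(P,ψ). For a > 0 set (A(a,z),B(a,z)) := (aᵖ·A(az), aᵖ·B(az))·𝒟_ψ(a)⁻¹. Then, as a → 0⁺, A(a,·) converges to the constant function 1 and B(a,·) converges to the constant function 0, uniformly on every compact subset of ℂ. -/
/-! The recurrence divides by `(n + 1) (2p + n + 1) ≥ 2p + 1 > 0`, so the coefficients grow at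
most geometrically and `A(w) - 1`, `B(w)` are `O(|w|)` near `0`. Since `𝒟_ψ(a)⁻¹` is lower
triangular with diagonal `(a⁻ᵖ, aᵖ)` and lower left entry `L(a)`, the rescaled row is
`(A(az) + aᵖ L(a) B(az), a²ᵖ B(az))`, so on a compact set the errors are `O(a + a^{1+p} |L(a)|)`
and `O(a^{2p+1})`; both vanish as `a → 0⁺` because `2p + 1 > 0` (for `p = 0`,
`L(a) = -ψ log a` and `a log a → 0`). -/

open Matrix MeasureTheory Filter

noncomputable section

namespace SatRec

variable {p ψ : ℝ} {P : Matrix (Fin 2) (Fin 2) ℝ} {α β : ℕ → ℝ}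

lemma succ_eq (h : SatRec p P ψ α β) (hp : -(1/2 : ℝ) < p) (n : ℕ) :
    α (n + 1) = -(α n * P 0 1 + β n * P 1 1) / ((n : ℝ) + 1)
        + ψ * (α n * P 0 0 + β n * P 1 0) / (((n : ℝ) + 1) * (2 * p + n + 1)) ∧
    β (n + 1) = (α n * P 0 0 + β n * P 1 0) / (2 * p + n + 1) := by
  have hα := congrFun (congrFun (h.2.2 n) 0) 0
  have hβ := congrFun (congrFun (h.2.2 n) 0) 1
  simp [Matrix.vecMul, dotProduct, Matrix.mul_apply, Fin.sum_univ_two, matJ] at hα hβ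
  have hn : (n : ℝ) + 1 ≠ 0 := n.cast_add_one_ne_zero
  have hc : 2 * p + n + 1 ≠ 0 := by have := n.cast_nonneg (α := ℝ); linarith
  constructor
  · rw [hα]; field_simp; ring
  · rw [hβ]; field_simp; ring

lemma abs_add_abs_succ_le (h : SatRec p P ψ α β) (hp : -(1/2 : ℝ) < p) (n : ℕ) :
    |α (n + 1)| + |β (n + 1)| ≤
      (1 + (|ψ| + 1) / (2 * p + 1)) * (|P 0 0| + |P 0 1| + |P 1 0| + |P 1 1|)
        * (|α n| + |β n|) := by
  obtain ⟨hα, hβ⟩ := h.succ_eq hp n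
  set u := α n * P 0 0 + β n * P 1 0
  set v := α n * P 0 1 + β n * P 1 1
  have ht : 0 < 2 * p + 1 := by linarith
  have hm : (1 : ℝ) ≤ n + 1 := by simp
  have hc : 2 * p + 1 ≤ 2 * p + n + 1 := by simp
  have huv : |u| + |v| ≤ (|P 0 0| + |P 0 1| + |P 1 0| + |P 1 1|) * (|α n| + |β n|) := by
    have := abs_add_le (α n * P 0 0) (β n * P 1 0)
    have := abs_add_le (α n * P 0 1) (β n * P 1 1)
    simp only [abs_mul] at *
    nlinarith [abs_nonneg (α n), abs_nonneg (β n), abs_nonneg (P 0 0), abs_nonneg (P 0 1),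
      abs_nonneg (P 1 0), abs_nonneg (P 1 1)]
  have hα' : |α (n + 1)| ≤ |v| + |ψ| / (2 * p + 1) * |u| := by
    rw [hα]
    refine (abs_add_le _ _).trans (add_le_add ?_ ?_)
    · rw [abs_div (-v), abs_neg, abs_of_pos (by linarith : (0 : ℝ) < n + 1)]
      exact div_le_self (abs_nonneg _) hm
    · have hmc : (0 : ℝ) < (n + 1) * (2 * p + n + 1) := by nlinarith
      rw [abs_div (ψ * u), abs_mul, abs_of_pos hmc, div_mul_eq_mul_div]
      gcongr
      nlinarith
  have hβ' : |β (n + 1)| ≤ 1 / (2 * p + 1) * |u| := by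
    rw [hβ, abs_div u, abs_of_pos (by linarith : 0 < 2 * p + n + 1), one_div_mul_eq_div]
    gcongr
  calc |α (n + 1)| + |β (n + 1)|
      ≤ |v| + (|ψ| + 1) / (2 * p + 1) * |u| := by rw [add_div, add_mul]; linarith
    _ ≤ (1 + (|ψ| + 1) / (2 * p + 1)) * (|u| + |v|) := by
      have : 0 ≤ (|ψ| + 1) / (2 * p + 1) := by positivity
      nlinarith [abs_nonneg u, abs_nonneg v]
    _ ≤ _ := by rw [mul_assoc]; gcongr

lemma abs_le_pow (h : SatRec p P ψ α β) (hp : -(1/2 : ℝ) < p) :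
    ∃ M, 0 ≤ M ∧ ∀ n, |α n| ≤ M ^ n ∧ |β n| ≤ M ^ n := by
  set M := (1 + (|ψ| + 1) / (2 * p + 1)) * (|P 0 0| + |P 0 1| + |P 1 0| + |P 1 1|)
  have hM : 0 ≤ M := by
    have : 0 < 2 * p + 1 := by linarith
    positivity
  have hsum : ∀ n, |α n| + |β n| ≤ M ^ n := by
    intro n
    induction n with
    | zero => simp [h.1, h.2.1]
    | succ n ih =>
      calc |α (n + 1)| + |β (n + 1)| ≤ M * (|α n| + |β n|) := h.abs_add_abs_succ_le hp n
        _ ≤ M ^ (n + 1) := by rw [pow_succ']; gcongr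
  exact ⟨M, hM, fun n => ⟨by linarith [hsum n, abs_nonneg (β n)],
    by linarith [hsum n, abs_nonneg (α n)]⟩⟩

end SatRec

lemma tendstoUniformlyOn_of_eventually_norm_sub_le {ι α β : Type*} [SeminormedAddCommGroup β]
    {F : ι → α → β} {f : α → β} {l : Filter ι} {s : Set α} {g : ι → ℝ}
    (hg : Tendsto g l (nhds 0)) (h : ∀ᶠ i in l, ∀ x ∈ s, ‖F i x - f x‖ ≤ g i) :
    TendstoUniformlyOn F f l s := by
  refine Metric.tendstoUniformlyOn_iff.2 fun ε hε => ?_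
  filter_upwards [h, hg (Iio_mem_nhds hε)] with i hi hgi x hx
  rw [dist_comm, dist_eq_norm]
  exact (hi x hx).trans_lt hgi

section GeneratingFunction

variable {c : ℕ → ℝ} {M : ℝ}

lemma norm_genF_sub_le (hM : 0 ≤ M) (hc : ∀ n, |c n| ≤ M ^ n) {w : ℂ} (hw : M * ‖w‖ ≤ 1/2) :
    ‖genF c w - c 0‖ ≤ 2 * M * ‖w‖ := by
  set r := M * ‖w‖
  have hr : 0 ≤ r := by positivity
  have hterm : ∀ n, ‖(c n : ℂ) * w ^ n‖ ≤ r ^ n := fun n => by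
    rw [norm_mul, norm_pow, Complex.norm_real, Real.norm_eq_abs, mul_pow]
    gcongr
    exact hc n
  have hsum : Summable fun n => (c n : ℂ) * w ^ n :=
    .of_norm_bounded (summable_geometric_of_lt_one hr (by linarith)) hterm
  have hgeom : HasSum (fun n => r ^ (n + 1)) (r * (1 - r)⁻¹) := by
    simpa only [pow_succ'] using (hasSum_geometric_of_lt_one hr (by linarith)).mul_left r
  calc ‖genF c w - c 0‖ = ‖∑' n, (c (n + 1) : ℂ) * w ^ (n + 1)‖ := by
        rw [genF, hsum.tsum_eq_zero_add]; simp
    _ ≤ r * (1 - r)⁻¹ := tsum_of_norm_bounded hgeom fun n => hterm (n + 1)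
    _ ≤ r * 2 := by
        gcongr
        rw [inv_le_comm₀ (by linarith) two_pos]
        linarith
    _ = 2 * M * ‖w‖ := by ring

lemma eventually_norm_genF_mul_sub_le (hM : 0 ≤ M) (hc : ∀ n, |c n| ≤ M ^ n) (R : ℝ) :
    ∀ᶠ a : ℝ in nhdsWithin 0 (Set.Ioi 0), ∀ z : ℂ, ‖z‖ ≤ R →
      ‖genF c (a * z) - c 0‖ ≤ 2 * M * R * a := by
  have hlim : Tendsto (fun a : ℝ => M * R * a) (nhdsWithin 0 (Set.Ioi 0)) (nhds 0) :=
    ((continuous_const_mul (M * R)).tendsto' 0 0 (mul_zero _)).mono_left nhdsWithin_le_nhds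
  filter_upwards [self_mem_nhdsWithin, hlim (Iio_mem_nhds one_half_pos)]
    with a (ha : 0 < a) (hsmall : M * R * a < 1/2) z hz
  have hw : ‖(a : ℂ) * z‖ ≤ a * R := by
    rw [norm_mul, Complex.norm_of_nonneg ha.le]
    gcongr
  have hMw : M * ‖(a : ℂ) * z‖ ≤ M * (a * R) := by gcongr
  calc ‖genF c (a * z) - c 0‖ ≤ 2 * M * ‖(a : ℂ) * z‖ := norm_genF_sub_le hM hc (by linarith)
    _ ≤ 2 * M * R * a := by linarith

end GeneratingFunction

def DpsiInvLowerLeft (p ψ a : ℝ) : ℝ :=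
  if p = 0 then -(ψ * Real.log a) else ψ / (2 * p) * (a ^ (-p) - a ^ p)

section Rescaling

variable {p ψ a : ℝ}

lemma Dpsi_inv (ha : 0 < a) :
    (Dpsi p ψ a)⁻¹ = !![a ^ (-p), 0; DpsiInvLowerLeft p ψ a, a ^ p] := by
  have hmul : a ^ p * a ^ (-p) = 1 := by rw [← Real.rpow_add ha]; simp
  apply inv_eq_right_inv
  by_cases hp : p = 0
  · subst hp
    simp only [Dpsi, DpsiInvLowerLeft]
    ext i j
    fin_cases i <;> fin_cases j <;> simp [Matrix.mul_apply, Fin.sum_univ_two]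
  · simp only [Dpsi, DpsiInvLowerLeft, if_neg hp]
    ext i j
    fin_cases i <;> fin_cases j <;>
      simp [Matrix.mul_apply, Fin.sum_univ_two] <;>
      first | linear_combination hmul | ring

variable {α β : ℕ → ℝ} {z : ℂ}

lemma rowAB_apply_zero (ha : 0 < a) :
    rowAB p ψ α β a z 0 0 =
      genF α (a * z) + ((a ^ p * DpsiInvLowerLeft p ψ a : ℝ) : ℂ) * genF β (a * z) := by
  have hmul : ((a ^ p : ℝ) : ℂ) * ((a ^ (-p) : ℝ) : ℂ) = 1 := by
    rw [← Complex.ofReal_mul, ← Real.rpow_add ha]; simp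
  rw [rowAB, Dpsi_inv ha]
  simp [Matrix.mul_apply, Fin.sum_univ_two]
  linear_combination genF α (a * z) * hmul

lemma rowAB_apply_one (ha : 0 < a) :
    rowAB p ψ α β a z 0 1 = ((a ^ p * a ^ p : ℝ) : ℂ) * genF β (a * z) := by
  rw [rowAB, Dpsi_inv ha]
  simp [Matrix.mul_apply, Fin.sum_univ_two]
  ring

lemma tendsto_mul_rpow_mul_rpow (hp : -(1/2 : ℝ) < p) :
    Tendsto (fun a : ℝ => a * (a ^ p * a ^ p)) (nhdsWithin 0 (Set.Ioi 0)) (nhds 0) := by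
  have hcont := Real.continuousAt_rpow_const 0 (2 * p + 1) (Or.inr (by linarith))
  rw [ContinuousAt, Real.zero_rpow (by linarith)] at hcont
  refine (hcont.mono_left nhdsWithin_le_nhds).congr' ?_
  filter_upwards [self_mem_nhdsWithin] with a (ha : 0 < a)
  rw [Real.rpow_add_one ha.ne', ← Real.rpow_add ha]
  ring_nf

lemma tendsto_mul_rpow_mul_DpsiInvLowerLeft (hp : -(1/2 : ℝ) < p) :
    Tendsto (fun a : ℝ => a * (a ^ p * DpsiInvLowerLeft p ψ a))
      (nhdsWithin 0 (Set.Ioi 0)) (nhds 0) := by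
  by_cases hp0 : p = 0
  · subst hp0
    have h := (tendsto_log_mul_rpow_nhdsGT_zero one_pos).const_mul (-ψ)
    simp only [Real.rpow_one, mul_zero] at h
    refine h.congr' ?_
    filter_upwards with a
    simp only [DpsiInvLowerLeft, if_true, Real.rpow_zero]
    ring
  · have h := (tendsto_id.mono_left nhdsWithin_le_nhds |>.sub
      (tendsto_mul_rpow_mul_rpow hp)).const_mul (ψ / (2 * p))
    simp only [sub_zero, mul_zero] at h
    refine h.congr' ?_
    filter_upwards [self_mem_nhdsWithin] with a (ha : 0 < a)
    have hmul : a ^ p * a ^ (-p) = 1 := by rw [← Real.rpow_add ha]; simp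
    simp only [DpsiInvLowerLeft, if_neg hp0, id]
    linear_combination (-(ψ / (2 * p)) * a) * hmul

end Rescaling

/-- as a → 0⁺, the rescaled pair (A(a,·),B(a,·)) converges to (1,0)
locally uniformly on ℂ. -/
theorem statement2 (p : ℝ) (hp : -(1/2 : ℝ) < p)
    (P : Matrix (Fin 2) (Fin 2) ℝ) (ψ : ℝ) (α β : ℕ → ℝ)
    (hrec : SatRec p P ψ α β) :
    ∀ K : Set ℂ, IsCompact K →
      TendstoUniformlyOn (fun (a : ℝ) (z : ℂ) => (rowAB p ψ α β a z) 0 0)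
        (fun _ => 1) (nhdsWithin 0 (Set.Ioi 0)) K ∧
      TendstoUniformlyOn (fun (a : ℝ) (z : ℂ) => (rowAB p ψ α β a z) 0 1)
        (fun _ => 0) (nhdsWithin 0 (Set.Ioi 0)) K := by
  intro K hK
  obtain ⟨M, hM, hcoeff⟩ := hrec.abs_le_pow hp
  obtain ⟨R, hR⟩ := hK.isBounded.exists_norm_le
  have hA := eventually_norm_genF_mul_sub_le hM (fun n => (hcoeff n).1) R
  have hB := eventually_norm_genF_mul_sub_le hM (fun n => (hcoeff n).2) R
  simp only [hrec.1, hrec.2.1, Complex.ofReal_one, Complex.ofReal_zero, sub_zero] at hA hB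
  have hid : Tendsto (fun a : ℝ => a) (nhdsWithin 0 (Set.Ioi 0)) (nhds 0) :=
    tendsto_id.mono_left nhdsWithin_le_nhds
  constructor
  · have hg : Tendsto (fun a => 2 * M * R * a
        + |a * (a ^ p * DpsiInvLowerLeft p ψ a)| * (2 * M * R))
        (nhdsWithin 0 (Set.Ioi 0)) (nhds 0) := by
      simpa using (hid.const_mul (2 * M * R)).add
        ((tendsto_mul_rpow_mul_DpsiInvLowerLeft hp).abs.mul_const (2 * M * R))
    refine tendstoUniformlyOn_of_eventually_norm_sub_le hg ?_
    filter_upwards [self_mem_nhdsWithin, hA, hB] with a (ha : 0 < a) hA hB z hz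
    rw [rowAB_apply_zero ha, add_sub_right_comm]
    calc _ ≤ ‖genF α (a * z) - 1‖ + |a ^ p * DpsiInvLowerLeft p ψ a| * ‖genF β (a * z)‖ := by
          refine (norm_add_le _ _).trans_eq ?_
          rw [norm_mul, Complex.norm_real, Real.norm_eq_abs]
      _ ≤ 2 * M * R * a + |a ^ p * DpsiInvLowerLeft p ψ a| * (2 * M * R * a) := by
          gcongr
          exacts [hA z (hR z hz), hB z (hR z hz)]
      _ = _ := by rw [abs_mul a, abs_of_pos ha]; ring
  · have hg : Tendsto (fun a => a * (a ^ p * a ^ p) * (2 * M * R))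
        (nhdsWithin 0 (Set.Ioi 0)) (nhds 0) := by
      simpa using (tendsto_mul_rpow_mul_rpow hp).mul_const (2 * M * R)
    refine tendstoUniformlyOn_of_eventually_norm_sub_le hg ?_
    filter_upwards [self_mem_nhdsWithin, hB] with a (ha : 0 < a) hB z hz
    rw [rowAB_apply_one ha, sub_zero, norm_mul, Complex.norm_of_nonneg (by positivity)]
    calc _ ≤ a ^ p * a ^ p * (2 * M * R * a) := by gcongr; exact hB z (hR z hz)
      _ = _ := by ring
end
end

section
/- Let p > −1/2, let P be a real positive semidefinite 2×2 matrix whose upper-left entry is nonzero, let ψ ∈ ℝ, let (A,B) = Ξₚ(P,ψ), and set E := A − i·B. Then E is a Hermite–Biehler function: |E(conj z)| < |E(z)| for every z ∈ ℂ with Im z > 0, and E(t) ≠ 0 for every t ∈ ℝ. -/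
/-!
Fix `z` with `0 < z.im` and put `φ(a) = Im (B(az) · conj A(az))`. On generating functions the
recurrence becomes the first-order system `z A' = ψ B - (P₀₁ A + P₁₁ B) z`,
`z B' = (P₀₀ A + P₁₀ B) z - 2p B`, from which `(a^{2p} φ(a))' = a^{2p} · Im z · Q(a)`, where `Q(a)`
is the Hermitian form of `P` at `(A(az), B(az))`, nonnegative since `P` is positive semidefinite.
As `B(0) = 0` and `2p + 1 > 0`, `a^{2p} φ(a) → 0` when `a → 0⁺`, and `Q(0) = P₀₀ > 0`; hence
`Im (B(z) · conj A(z)) = φ(1) > 0`, which is `|E(conj z)| < |E(z)|`.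

For real `t` the values `A(t)`, `B(t)` are real, so `E(t) = 0` forces `A(t) = B(t) = 0`. The energy
`s(a) = |A(at)|² + |B(at)|²` satisfies `a s' ≥ -K s` on `(0, 1]`, so `a^K s(a)` is nondecreasing
there; it vanishes at `a = 1`, hence `s ≡ 0` on `(0, 1]`, contradicting `s(0) = |A(0)|² = 1`.
-/

open Matrix MeasureTheory Filter

noncomputable section

open Set Topology ComplexConjugate

section PowerSeries

variable {c : ℕ → ℂ} {F : ℂ → ℂ}

theorem summable_norm_mul_pow_of_forall_summable (h : ∀ z : ℂ, Summable fun n ↦ c n * z ^ n)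
    (r : NNReal) : Summable fun n ↦ ‖c n‖ * (r : ℝ) ^ n := by
  set q := FormalMultilinearSeries.ofScalars ℂ c
  have hq : q.radius = ⊤ := ENNReal.eq_top_of_forall_nnreal_le fun r ↦
    q.le_radius_of_tendsto (l := 0) <| by
      simpa [q, FormalMultilinearSeries.ofScalars_norm] using (h r).tendsto_atTop_zero.norm
  simpa [q, FormalMultilinearSeries.ofScalars_norm] using
    q.summable_norm_mul_pow (hq ▸ ENNReal.coe_lt_top)

theorem norm_natCast_mul_pow_pred_le {y : ℂ} {R : ℝ} (hR : 1 ≤ R) (hy : ‖y‖ ≤ R) (n : ℕ) :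
    ‖(n : ℂ) * y ^ (n - 1)‖ ≤ (2 * R) ^ n := by
  rw [norm_mul, norm_pow, Complex.norm_natCast, mul_pow]
  gcongr
  · exact_mod_cast (Nat.lt_two_pow_self).le
  · calc ‖y‖ ^ (n - 1) ≤ R ^ (n - 1) := by gcongr
      _ ≤ R ^ n := pow_le_pow_right₀ hR (Nat.sub_le n 1)

theorem hasDerivAt_of_forall_hasSum (hF : ∀ z, HasSum (fun n ↦ c n * z ^ n) (F z)) (z : ℂ) :
    HasDerivAt F (∑' n, c n * (n * z ^ (n - 1))) z ∧
      Summable fun n ↦ c n * (n * z ^ (n - 1)) := by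
  set R := ‖z‖ + 1
  have hR : 1 ≤ R := by simp [R]
  have hu : Summable fun n ↦ ‖c n‖ * (2 * R) ^ n :=
    summable_norm_mul_pow_of_forall_summable (fun z ↦ (hF z).summable) ⟨2 * R, by positivity⟩
  have hbound : ∀ n, ∀ y ∈ Metric.ball (0 : ℂ) R,
      ‖c n * (n * y ^ (n - 1))‖ ≤ ‖c n‖ * (2 * R) ^ n := fun n y hy ↦ by
    rw [norm_mul]
    exact mul_le_mul_of_nonneg_left (norm_natCast_mul_pow_pred_le hR
      (mem_ball_zero_iff.mp hy).le n) (norm_nonneg _)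
  have hz : z ∈ Metric.ball (0 : ℂ) R := by simp [R]
  have hF' : F = fun y ↦ ∑' n, c n * y ^ n := funext fun y ↦ (hF y).tsum_eq.symm
  refine ⟨hF' ▸ hasDerivAt_tsum_of_isPreconnected hu Metric.isOpen_ball
    (convex_ball 0 R).isPreconnected (fun n y _ ↦ (hasDerivAt_pow n y).const_mul (c n))
    hbound (Metric.mem_ball_self (by positivity)) (hF 0).summable hz,
    .of_norm_bounded hu fun n ↦ hbound n z hz⟩

theorem hasSum_mul_deriv_of_forall_hasSum (hF : ∀ z, HasSum (fun n ↦ c n * z ^ n) (F z)) :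
    Differentiable ℂ F ∧ ∀ z, HasSum (fun n ↦ n * c n * z ^ n) (z * deriv F z) := by
  refine ⟨fun z ↦ (hasDerivAt_of_forall_hasSum hF z).1.differentiableAt, fun z ↦ ?_⟩
  obtain ⟨hd, hs⟩ := hasDerivAt_of_forall_hasSum hF z
  rw [hd.deriv]
  have hterm : (fun n : ℕ ↦ n * c n * z ^ n) = fun n ↦ z * (c n * (n * z ^ (n - 1))) := by
    funext n
    rcases n with _ | n
    · simp
    · simp only [Nat.add_sub_cancel, pow_succ]; push_cast; ring
  exact hterm ▸ hs.hasSum.mul_left z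

theorem HasSum.eq_coeff_zero {c : ℕ → ℂ} {s : ℂ} (h : HasSum (fun n ↦ c n * 0 ^ n) s) :
    s = c 0 :=
  h.unique (by simpa using hasSum_single (f := fun n ↦ c n * 0 ^ n) 0 fun n hn ↦ by simp [hn])

theorem apply_conj_of_forall_hasSum {a : ℕ → ℝ}
    (hF : ∀ z, HasSum (fun n ↦ (a n : ℂ) * z ^ n) (F z)) (z : ℂ) : F (conj z) = conj (F z) :=
  (hF (conj z)).unique (by simpa using Complex.hasSum_conj'.mpr (hF z))

end PowerSeries

theorem SatRec.coeff_succ {p ψ : ℝ} {P : Matrix (Fin 2) (Fin 2) ℝ} {α β : ℕ → ℝ}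
    (h : SatRec p P ψ α β) (hp : ∀ n : ℕ, 2 * p + n + 1 ≠ 0) (n : ℕ) :
    (2 * p + n + 1) * β (n + 1) = P 0 0 * α n + P 1 0 * β n ∧
      (n + 1) * α (n + 1) = ψ * β (n + 1) - (P 0 1 * α n + P 1 1 * β n) := by
  have hrow := h.2.2 n
  have h0 := congrFun (congrFun hrow 0) 0
  have h1 := congrFun (congrFun hrow 0) 1
  simp [Matrix.vecMul, dotProduct, Matrix.mul_apply, Fin.sum_univ_two, matJ] at h0 h1
  have hβ : (2 * p + n + 1) * β (n + 1) = P 0 0 * α n + P 1 0 * β n := by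
    rw [h1]; field_simp [hp n]; ring
  refine ⟨hβ, ?_⟩
  rw [h0]; field_simp [hp n]; linear_combination -ψ * hβ

theorem HasSum.eq_mul_add_of_succ {f g h : ℕ → ℂ} {S U V z : ℂ} (hf : HasSum f S)
    (hg : HasSum g U) (hh : HasSum h V) (hf0 : f 0 = 0) (hh0 : h 0 = 0)
    (hrec : ∀ n, f (n + 1) = z * g n + h (n + 1)) : S = z * U + V := by
  have hf' : HasSum (fun n ↦ f (n + 1)) S := by
    simpa [hf0] using (hasSum_nat_add_iff' 1).mpr hf
  have hh' : HasSum (fun n ↦ h (n + 1)) V := by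
    simpa [hh0] using (hasSum_nat_add_iff' 1).mpr hh
  exact hf'.unique (funext hrec ▸ (hg.mul_left z).add hh')

structure SatODE (p ψ : ℝ) (P : Matrix (Fin 2) (Fin 2) ℝ) (A B : ℂ → ℂ) : Prop where
  differentiable_A : Differentiable ℂ A
  differentiable_B : Differentiable ℂ B
  mul_deriv_A : ∀ z, z * deriv A z = ψ * B z - (P 0 1 * A z + P 1 1 * B z) * z
  mul_deriv_B : ∀ z, z * deriv B z = (P 0 0 * A z + P 1 0 * B z) * z - 2 * p * B z

theorem SatRec.satODE {p ψ : ℝ} {P : Matrix (Fin 2) (Fin 2) ℝ} {α β : ℕ → ℝ} {A B : ℂ → ℂ}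
    (h : SatRec p P ψ α β) (hp : ∀ n : ℕ, 2 * p + n + 1 ≠ 0)
    (hA : ∀ z : ℂ, HasSum (fun n ↦ (α n : ℂ) * z ^ n) (A z))
    (hB : ∀ z : ℂ, HasSum (fun n ↦ (β n : ℂ) * z ^ n) (B z)) : SatODE p ψ P A B := by
  obtain ⟨hAd, hA'⟩ := hasSum_mul_deriv_of_forall_hasSum hA
  obtain ⟨hBd, hB'⟩ := hasSum_mul_deriv_of_forall_hasSum hB
  have hβ0 : (β 0 : ℂ) = 0 := by simp [h.2.1]
  refine ⟨hAd, hBd, fun z ↦ ?_, fun z ↦ ?_⟩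
  · have hrec : ∀ n : ℕ, ((n + 1 : ℕ) : ℂ) * α (n + 1) * z ^ (n + 1) =
        z * -(P 0 1 * (α n * z ^ n) + P 1 1 * (β n * z ^ n)) + ψ * (β (n + 1) * z ^ (n + 1)) := by
      intro n
      have hc := congrArg Complex.ofReal (h.coeff_succ hp n).2
      push_cast at hc ⊢
      linear_combination z ^ (n + 1) * hc
    rw [(hA' z).eq_mul_add_of_succ (((hA z).mul_left _).add ((hB z).mul_left _)).neg
      ((hB z).mul_left _) (by simp) (by simp [hβ0]) hrec]
    ring
  · have hrec : ∀ n : ℕ, ((n + 1 : ℕ) : ℂ) * β (n + 1) * z ^ (n + 1) =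
        z * (P 0 0 * (α n * z ^ n) + P 1 0 * (β n * z ^ n)) +
          -(2 * p) * (β (n + 1) * z ^ (n + 1)) := by
      intro n
      have hc := congrArg Complex.ofReal (h.coeff_succ hp n).1
      push_cast at hc ⊢
      linear_combination z ^ (n + 1) * hc
    rw [(hB' z).eq_mul_add_of_succ (((hA z).mul_left _).add ((hB z).mul_left _))
      ((hB z).mul_left _) (by simp) (by simp [hβ0]) hrec]
    ring

section RealAnalysis

variable {f f' : ℝ → ℝ} {c b : ℝ}

theorem HasDerivAt.rpow_const_mul {d a : ℝ} (hf : HasDerivAt f d a) (ha : 0 < a) :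
    HasDerivAt (fun x ↦ x ^ c * f x) (a ^ (c - 1) * (c * f a + a * d)) a := by
  refine ((Real.hasDerivAt_rpow_const (Or.inl ha.ne')).mul hf).congr_deriv ?_
  rw [Real.rpow_sub_one ha.ne']
  field_simp

theorem monotoneOn_rpow_mul_Ioc (hf : ∀ a ∈ Ioc 0 b, HasDerivAt f (f' a) a)
    (h : ∀ a ∈ Ioo 0 b, 0 ≤ c * f a + a * f' a) :
    MonotoneOn (fun x ↦ x ^ c * f x) (Ioc 0 b) := by
  refine monotoneOn_of_hasDerivWithinAt_nonneg (f' := fun a ↦ a ^ (c - 1) * (c * f a + a * f' a))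
    (convex_Ioc 0 b)
    (fun a ha ↦ ((hf a ha).rpow_const_mul ha.1).continuousAt.continuousWithinAt)
    (fun a ha ↦ ?_) (fun a ha ↦ ?_) <;> rw [interior_Ioc] at ha
  · exact ((hf a (Ioo_subset_Ioc_self ha)).rpow_const_mul ha.1).hasDerivWithinAt
  · exact mul_nonneg (Real.rpow_nonneg ha.1.le _) (h a ha)

theorem strictMonoOn_rpow_mul_Ioc (hf : ∀ a ∈ Ioc 0 b, HasDerivAt f (f' a) a)
    (h : ∀ a ∈ Ioo 0 b, 0 < c * f a + a * f' a) :
    StrictMonoOn (fun x ↦ x ^ c * f x) (Ioc 0 b) := by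
  refine strictMonoOn_of_hasDerivWithinAt_pos (f' := fun a ↦ a ^ (c - 1) * (c * f a + a * f' a))
    (convex_Ioc 0 b)
    (fun a ha ↦ ((hf a ha).rpow_const_mul ha.1).continuousAt.continuousWithinAt)
    (fun a ha ↦ ?_) (fun a ha ↦ ?_) <;> rw [interior_Ioc] at ha
  · exact ((hf a (Ioo_subset_Ioc_self ha)).rpow_const_mul ha.1).hasDerivWithinAt
  · exact mul_pos (Real.rpow_pos_of_pos ha.1 _) (h a ha)

theorem tendsto_rpow_mul_nhdsGT_zero {d : ℝ} (hc : -1 < c) (hf : HasDerivAt f d 0)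
    (hf0 : f 0 = 0) : Tendsto (fun x ↦ x ^ c * f x) (𝓝[>] 0) (𝓝 0) := by
  have hO : f =O[𝓝[>] 0] fun x ↦ x := by
    simpa [hf0] using hf.isBigO_sub.mono nhdsWithin_le_nhds
  have hpow : Tendsto (fun x : ℝ ↦ x ^ (c + 1)) (𝓝[>] 0) (𝓝 0) := by
    simpa [Real.zero_rpow (by linarith : c + 1 ≠ 0)] using
      (Real.continuousAt_rpow_const 0 (c + 1) (Or.inr (by linarith))).tendsto.mono_left
        nhdsWithin_le_nhds
  refine ((Asymptotics.isBigO_refl (fun x : ℝ ↦ x ^ c) _).mul hO).trans_tendsto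
    (hpow.congr' ?_)
  filter_upwards [self_mem_nhdsWithin] with x hx
  simp [Real.rpow_add_one (ne_of_gt hx)]

end RealAnalysis

/-- For symmetric `P`, this is `Re (v* P v)` with `v = (x, y)`. -/
def hermForm (P : Matrix (Fin 2) (Fin 2) ℝ) (x y : ℂ) : ℝ :=
  P 0 0 * Complex.normSq x + 2 * P 0 1 * (x * conj y).re + P 1 1 * Complex.normSq y

theorem Matrix.PosSemidef.hermForm_nonneg {P : Matrix (Fin 2) (Fin 2) ℝ} (hP : P.PosSemidef)
    (x y : ℂ) : 0 ≤ hermForm P x y := by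
  have hsymm : P 1 0 = P 0 1 := by simpa using congrFun (congrFun hP.1 0) 1
  have hquad (u v : ℝ) : 0 ≤ P 0 0 * u ^ 2 + 2 * P 0 1 * (u * v) + P 1 1 * v ^ 2 := by
    have := hP.dotProduct_mulVec_nonneg ![u, v]
    simp [dotProduct, Matrix.mulVec, Fin.sum_univ_two, hsymm] at this
    linarith
  have := add_nonneg (hquad x.re y.re) (hquad x.im y.im)
  simp only [hermForm, Complex.normSq_apply, Complex.mul_re, Complex.conj_re, Complex.conj_im]
  linarith

theorem continuous_hermForm (P : Matrix (Fin 2) (Fin 2) ℝ) :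
    Continuous fun v : ℂ × ℂ ↦ hermForm P v.1 v.2 := by
  unfold hermForm; fun_prop

theorem hasDerivAt_comp_ofReal_mul {F : ℂ → ℂ} (hF : Differentiable ℂ F) (z : ℂ) (a : ℝ) :
    HasDerivAt (fun b : ℝ ↦ F (b * z)) (z * deriv F (a * z)) a := by
  simpa [mul_comm] using ((hF _).hasDerivAt.comp (a : ℂ) (hasDerivAt_mul_const z)).comp_ofReal

theorem norm_conj_sub_I_mul_conj_lt {x y : ℂ} (h : 0 < (y * conj x).im) :
    ‖conj x - Complex.I * conj y‖ < ‖x - Complex.I * y‖ := by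
  rw [Complex.norm_def, Complex.norm_def]
  apply Real.sqrt_lt_sqrt (Complex.normSq_nonneg _)
  simp only [Complex.normSq_apply, Complex.sub_re, Complex.sub_im, Complex.mul_re,
    Complex.mul_im, Complex.I_re, Complex.I_im, Complex.conj_re, Complex.conj_im] at h ⊢
  nlinarith

theorem eq_zero_of_sub_I_mul_eq_zero {x y : ℂ} (hx : conj x = x) (hy : conj y = y)
    (h : x - Complex.I * y = 0) : x = 0 ∧ y = 0 := by
  rw [Complex.conj_eq_iff_im] at hx hy
  simp only [Complex.ext_iff, Complex.sub_re, Complex.sub_im, Complex.mul_re, Complex.mul_im,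
    Complex.I_re, Complex.I_im, Complex.zero_re, Complex.zero_im] at h ⊢
  constructor <;> constructor <;> linarith

section Pointwise

variable {p ψ : ℝ} {P : Matrix (Fin 2) (Fin 2) ℝ}

theorem two_mul_im_add_im_eq_im_mul_hermForm (hP : P 1 0 = P 0 1) {x y u v w : ℂ}
    (hu : w * u = ψ * y - (P 0 1 * x + P 1 1 * y) * w)
    (hv : w * v = (P 0 0 * x + P 1 0 * y) * w - 2 * p * y) :
    2 * p * (y * conj x).im + (w * v * conj x + y * conj (w * u)).im =
      w.im * hermForm P x y := by
  rw [hu, hv, hP]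
  simp only [hermForm, Complex.normSq_apply, Complex.add_im, Complex.sub_im, Complex.mul_im,
    Complex.mul_re, Complex.add_re, Complex.sub_re, Complex.ofReal_re, Complex.ofReal_im,
    Complex.conj_re, Complex.conj_im, map_sub, map_add, map_mul, Complex.conj_ofReal,
    Complex.re_ofNat, Complex.im_ofNat]
  ring

theorem neg_le_inner_add_inner {x y u v w : ℂ} {r : ℝ} (hw : ‖w‖ ≤ r)
    (hu : w * u = ψ * y - (P 0 1 * x + P 1 1 * y) * w)
    (hv : w * v = (P 0 0 * x + P 1 0 * y) * w - 2 * p * y) :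
    -(4 * (|ψ| + 2 * |p| + r * (|P 0 0| + |P 0 1| + |P 1 0| + |P 1 1|)) * (‖x‖ ^ 2 + ‖y‖ ^ 2)) ≤
      2 * inner ℝ x (w * u) + 2 * inner ℝ y (w * v) := by
  set N := ‖x‖ + ‖y‖
  have hx : ‖x‖ ≤ N := le_add_of_nonneg_right (norm_nonneg y)
  have hy : ‖y‖ ≤ N := le_add_of_nonneg_left (norm_nonneg x)
  have hr : 0 ≤ r := (norm_nonneg w).trans hw
  have hscal (a : ℝ) (v : ℂ) : ‖(a : ℂ) * v‖ = |a| * ‖v‖ := by simp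
  have hlin (a b : ℝ) : ‖(a * x + b * y) * w‖ ≤ (|a| + |b|) * N * r := by
    rw [norm_mul]
    gcongr
    calc ‖(a : ℂ) * x + b * y‖ ≤ |a| * ‖x‖ + |b| * ‖y‖ := by
          simpa only [hscal] using norm_add_le (a * x) (b * y)
      _ ≤ (|a| + |b|) * N := by nlinarith [abs_nonneg a, abs_nonneg b]
  have hwu : ‖w * u‖ ≤ (|ψ| + r * (|P 0 1| + |P 1 1|)) * N := by
    rw [hu]
    calc _ ≤ |ψ| * ‖y‖ + (|P 0 1| + |P 1 1|) * N * r :=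
          (norm_sub_le _ _).trans (by rw [hscal]; gcongr; exact hlin _ _)
      _ ≤ _ := by nlinarith [abs_nonneg ψ]
  have hwv : ‖w * v‖ ≤ (2 * |p| + r * (|P 0 0| + |P 1 0|)) * N := by
    have h2p : ‖2 * (p : ℂ) * y‖ = 2 * |p| * ‖y‖ := by simp
    rw [hv]
    calc _ ≤ (|P 0 0| + |P 1 0|) * N * r + 2 * |p| * ‖y‖ :=
          (norm_sub_le _ _).trans (by rw [h2p]; gcongr; exact hlin _ _)
      _ ≤ _ := by nlinarith [abs_nonneg p]
  have hM : 0 ≤ |ψ| + 2 * |p| + r * (|P 0 0| + |P 0 1| + |P 1 0| + |P 1 1|) := by positivity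
  have h1 := neg_le_of_abs_le (abs_real_inner_le_norm x (w * u))
  have h2 := neg_le_of_abs_le (abs_real_inner_le_norm y (w * v))
  nlinarith [mul_le_mul hx hwu (norm_nonneg _) (by positivity),
    mul_le_mul hy hwv (norm_nonneg _) (by positivity),
    mul_nonneg hM (sq_nonneg (‖x‖ - ‖y‖))]

end Pointwise

namespace SatODE

variable {p ψ : ℝ} {P : Matrix (Fin 2) (Fin 2) ℝ} {A B : ℂ → ℂ}

theorem hasDerivAt_im_mul_conj (h : SatODE p ψ P A B) (z : ℂ) (a : ℝ) :
    HasDerivAt (fun b : ℝ ↦ (B (b * z) * conj (A (b * z))).im)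
      ((z * deriv B (a * z) * conj (A (a * z)) + B (a * z) * conj (z * deriv A (a * z))).im) a :=
  Complex.imCLM.hasFDerivAt.comp_hasDerivAt a <|
    (hasDerivAt_comp_ofReal_mul h.differentiable_B z a).mul
      (hasDerivAt_comp_ofReal_mul h.differentiable_A z a).star

theorem two_mul_im_add_mul_im_eq (h : SatODE p ψ P A B) (hP : P 1 0 = P 0 1) (z : ℂ) (a : ℝ) :
    2 * p * (B (a * z) * conj (A (a * z))).im +
        a * (z * deriv B (a * z) * conj (A (a * z)) + B (a * z) * conj (z * deriv A (a * z))).im =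
      a * z.im * hermForm P (A (a * z)) (B (a * z)) := by
  have key := two_mul_im_add_im_eq_im_mul_hermForm hP
    (h.mul_deriv_A (a * z)) (h.mul_deriv_B (a * z))
  rw [Complex.im_ofReal_mul] at key
  have hscale : a * (z * deriv B (a * z) * conj (A (a * z)) +
      B (a * z) * conj (z * deriv A (a * z))).im = (a * z * deriv B (a * z) * conj (A (a * z)) +
      B (a * z) * conj (a * z * deriv A (a * z))).im := by
    rw [← Complex.im_ofReal_mul]
    congr 1
    simp only [map_mul, Complex.conj_ofReal]
    ring
  rwa [hscale]

theorem im_mul_conj_pos (h : SatODE p ψ P A B) (hP : P.PosSemidef) (h11 : P 0 0 ≠ 0)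
    (hp : -(1 / 2 : ℝ) < p) (hA0 : A 0 ≠ 0) (hB0 : B 0 = 0) {z : ℂ} (hz : 0 < z.im) :
    0 < (B z * conj (A z)).im := by
  set φ : ℝ → ℝ := fun a ↦ (B (a * z) * conj (A (a * z))).im
  set φ' : ℝ → ℝ := fun a ↦
    (z * deriv B (a * z) * conj (A (a * z)) + B (a * z) * conj (z * deriv A (a * z))).im
  set Q : ℝ → ℝ := fun a ↦ hermForm P (A (a * z)) (B (a * z))
  have hφ (a : ℝ) : HasDerivAt φ (φ' a) a := h.hasDerivAt_im_mul_conj z a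
  have hkey (a : ℝ) : 2 * p * φ a + a * φ' a = a * z.im * Q a :=
    h.two_mul_im_add_mul_im_eq (by simpa using congrFun (congrFun hP.1 0) 1) z a
  have hQ0 : 0 < Q 0 := by
    have h11' : 0 < P 0 0 := hP.diag_nonneg.lt_of_ne' h11
    simpa [Q, hermForm, hB0] using mul_pos h11' (Complex.normSq_pos.mpr hA0)
  have hray : Continuous fun a : ℝ ↦ (a : ℂ) * z := by fun_prop
  have hQc : Continuous Q := (continuous_hermForm P).comp <|
    (h.differentiable_A.continuous.comp hray).prodMk (h.differentiable_B.continuous.comp hray)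
  obtain ⟨u, hu, hQu⟩ := mem_nhdsGT_iff_exists_Ioo_subset.mp
    (nhdsWithin_le_nhds (hQc.continuousAt.eventually (lt_mem_nhds hQ0)))
  set ε := min u 1
  have hε : ε ∈ Ioc 0 1 := ⟨lt_min hu zero_lt_one, min_le_right u 1⟩
  have hmono : MonotoneOn (fun a ↦ a ^ (2 * p) * φ a) (Ioc 0 1) :=
    monotoneOn_rpow_mul_Ioc (fun a _ ↦ hφ a) fun a ha ↦ hkey a ▸
      mul_nonneg (mul_nonneg ha.1.le hz.le) (hP.hermForm_nonneg _ _)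
  have hstrict : StrictMonoOn (fun a ↦ a ^ (2 * p) * φ a) (Ioc 0 ε) :=
    strictMonoOn_rpow_mul_Ioc (fun a _ ↦ hφ a) fun a ha ↦ hkey a ▸
      mul_pos (mul_pos ha.1 hz) (hQu ⟨ha.1, ha.2.trans_le (min_le_left u 1)⟩)
  have hlim := tendsto_rpow_mul_nhdsGT_zero (c := 2 * p) (by linarith) (hφ 0) (by simp [φ, hB0])
  have hε2 : ε / 2 ∈ Ioc 0 1 := ⟨half_pos hε.1, by linarith [hε.2]⟩
  have hhalf : 0 ≤ (ε / 2) ^ (2 * p) * φ (ε / 2) :=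
    le_of_tendsto hlim <| eventually_of_mem (Ioo_mem_nhdsGT (half_pos hε.1)) fun a ha ↦
      hmono ⟨ha.1, ha.2.le.trans hε2.2⟩ hε2 ha.2.le
  calc 0 ≤ (ε / 2) ^ (2 * p) * φ (ε / 2) := hhalf
    _ < ε ^ (2 * p) * φ ε :=
      hstrict ⟨hε2.1, by linarith [hε.1]⟩ ⟨hε.1, le_rfl⟩ (by linarith [hε.1])
    _ ≤ 1 ^ (2 * p) * φ 1 := hmono hε ⟨one_pos, le_rfl⟩ hε.2
    _ = (B z * conj (A z)).im := by simp [φ]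

theorem eq_zero_of_eq_zero (h : SatODE p ψ P A B) {t : ℂ} (hAt : A t = 0) (hBt : B t = 0) :
    A 0 = 0 ∧ B 0 = 0 := by
  set s : ℝ → ℝ := fun a ↦ ‖A (a * t)‖ ^ 2 + ‖B (a * t)‖ ^ 2
  set s' : ℝ → ℝ := fun a ↦ 2 * inner ℝ (A (a * t)) (t * deriv A (a * t)) +
    2 * inner ℝ (B (a * t)) (t * deriv B (a * t))
  have hs (a : ℝ) : HasDerivAt s (s' a) a :=
    (hasDerivAt_comp_ofReal_mul h.differentiable_A t a).norm_sq.add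
      (hasDerivAt_comp_ofReal_mul h.differentiable_B t a).norm_sq
  set K := 4 * (|ψ| + 2 * |p| + ‖t‖ * (|P 0 0| + |P 0 1| + |P 1 0| + |P 1 1|))
  have hK (a : ℝ) (ha : a ∈ Ioc 0 1) : 0 ≤ K * s a + a * s' a := by
    have hw : ‖(a : ℂ) * t‖ ≤ ‖t‖ := by
      rw [norm_mul, Complex.norm_real, Real.norm_of_nonneg ha.1.le]
      exact mul_le_of_le_one_left (norm_nonneg t) ha.2
    have := neg_le_inner_add_inner hw (h.mul_deriv_A _) (h.mul_deriv_B _)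
    have hinner (x v : ℂ) : inner ℝ x (a * t * v) = a * inner ℝ x (t * v) := by
      rw [mul_assoc, ← Complex.real_smul, real_inner_smul_right]
    rw [hinner, hinner] at this
    simp only [s, s']
    linarith
  have hmono := monotoneOn_rpow_mul_Ioc (c := K) (fun a _ ↦ hs a)
    fun a ha ↦ hK a (Ioo_subset_Ioc_self ha)
  have hle (a : ℝ) (ha : a ∈ Ioc 0 1) : s a ≤ 0 := by
    have := hmono ha ⟨one_pos, le_rfl⟩ ha.2
    simp only [s, Complex.ofReal_one, one_mul, hAt, hBt, norm_zero] at this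
    exact nonpos_of_mul_nonpos_right (by simpa using this) (Real.rpow_pos_of_pos ha.1 K)
  have hs0 : s 0 ≤ 0 :=
    le_of_tendsto ((hs 0).continuousAt.tendsto.mono_left nhdsWithin_le_nhds)
      (eventually_of_mem (Ioc_mem_nhdsGT one_pos) hle)
  simp only [s, Complex.ofReal_zero, zero_mul] at hs0
  have hA := sq_nonneg ‖A 0‖
  have hB := sq_nonneg ‖B 0‖
  exact ⟨norm_eq_zero.mp (pow_eq_zero_iff two_ne_zero |>.mp (by linarith)),
    norm_eq_zero.mp (pow_eq_zero_iff two_ne_zero |>.mp (by linarith))⟩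

end SatODE

/-- for p > −1/2, P positive semidefinite with nonzero upper-left
entry, E := A − i·B is a Hermite–Biehler function. -/
theorem statement3 (p : ℝ) (hp : -(1/2 : ℝ) < p)
    (P : Matrix (Fin 2) (Fin 2) ℝ) (hPsd : P.PosSemidef) (h11 : P 0 0 ≠ 0)
    (ψ : ℝ) (α β : ℕ → ℝ) (hrec : SatRec p P ψ α β)
    (A B E : ℂ → ℂ)
    (hA : ∀ z : ℂ, HasSum (fun n : ℕ => (α n : ℂ) * z ^ n) (A z))
    (hB : ∀ z : ℂ, HasSum (fun n : ℕ => (β n : ℂ) * z ^ n) (B z))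
    (hE : ∀ z : ℂ, E z = A z - Complex.I * B z) :
    (∀ z : ℂ, 0 < z.im → ‖E (starRingEnd ℂ z)‖ < ‖E z‖) ∧
    (∀ t : ℝ, E (t : ℂ) ≠ 0) := by
  have hode : SatODE p ψ P A B :=
    hrec.satODE (fun n ↦ by linarith [(n.cast_nonneg : (0 : ℝ) ≤ n)]) hA hB
  have hA0 : A 0 = 1 := by simpa [hrec.1] using (hA 0).eq_coeff_zero
  have hB0 : B 0 = 0 := by simpa [hrec.2.1] using (hB 0).eq_coeff_zero
  refine ⟨fun z hz ↦ ?_, fun t ht ↦ ?_⟩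
  · rw [hE, hE, apply_conj_of_forall_hasSum hA, apply_conj_of_forall_hasSum hB]
    exact norm_conj_sub_I_mul_conj_lt
      (hode.im_mul_conj_pos hPsd h11 hp (by simp [hA0]) hB0 hz)
  · have hreal {F : ℂ → ℂ} {c : ℕ → ℝ}
        (hF : ∀ z : ℂ, HasSum (fun n ↦ (c n : ℂ) * z ^ n) (F z)) : conj (F t) = F t := by
      simpa using (apply_conj_of_forall_hasSum hF t).symm
    obtain ⟨hAt, hBt⟩ := eq_zero_of_sub_I_mul_eq_zero (hreal hA) (hreal hB) (hE t ▸ ht)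
    simpa [hA0] using (hode.eq_zero_of_eq_zero hAt hBt).1
end
end

section
/- The map (p,P,ψ) ↦ Ξₚ(P,ψ) is continuous from (ℝ \ {−(k+1)/2 : k ∈ ℕ₀}) × ℝ^{2×2} × ℝ into pairs of entire functions endowed with the topology of locally uniform convergence: if (pᵢ,Pᵢ,ψᵢ) → (p,P,ψ) with all pᵢ and p avoiding {−(k+1)/2 : k ∈ ℕ₀}, and (Aᵢ,Bᵢ) = Ξ_{pᵢ}(Pᵢ,ψᵢ), (A,B) = Ξₚ(P,ψ), then Aᵢ → A and Bᵢ → B uniformly on every compact subset of ℂ. -/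
open Matrix MeasureTheory Filter

noncomputable section

/-!
The coefficients depend continuously on `(p, P, ψ)` because each step of the recurrence
only divides by `(n + 1)(2p + n + 1)`, which stays away from `0` near a point `p` off the poles.
Near such a `p` one even has `|2p + n + 1| ≥ c (n + 1)` uniformly in `n`, so the recurrence gives
the factorial bound `|αₙ| + |βₙ| ≤ Gⁿ / n!` with one `G` for all nearby parameters. On a compact
set the power series are then dominated by a single summable series, and Tannery's theorem turns
coefficientwise convergence into uniform convergence.
-/

open Topology
open scoped Nat

lemma abs_mul_add_mul_le {x y u v B : ℝ} (hu : |u| ≤ B) (hv : |v| ≤ B) :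
    |x * u + y * v| ≤ (|x| + |y|) * B := by
  calc |x * u + y * v| ≤ |x| * |u| + |y| * |v| := by
        simpa only [abs_mul] using abs_add_le (x * u) (y * v)
    _ ≤ |x| * B + |y| * B := by gcongr
    _ = (|x| + |y|) * B := by ring

lemma le_pow_div_factorial_of_succ_mul_le {s : ℕ → ℝ} {G : ℝ} (hG : 0 ≤ G) (h0 : s 0 ≤ 1)
    (h : ∀ n : ℕ, (n + 1) * s (n + 1) ≤ G * s n) (n : ℕ) : s n ≤ G ^ n / n ! := by
  induction n with
  | zero => simpa using h0
  | succ n ih =>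
    rw [le_div_iff₀ (by positivity), Nat.factorial_succ, Nat.cast_mul, Nat.cast_succ, pow_succ']
    rw [le_div_iff₀ (by positivity)] at ih
    calc s (n + 1) * ((n + 1) * n !) = (n + 1) * s (n + 1) * n ! := by ring
      _ ≤ G * s n * n ! := mul_le_mul_of_nonneg_right (h n) (by positivity)
      _ ≤ G * G ^ n := by rw [mul_assoc]; exact mul_le_mul_of_nonneg_left ih hG

lemma tendstoUniformlyOn_of_tendsto_coeff {ι 𝕜 : Type*} [NormedField 𝕜] [CompleteSpace 𝕜]
    {l : Filter ι} [l.NeBot] {a : ι → ℕ → 𝕜} {a₀ : ℕ → 𝕜} {F : ι → 𝕜 → 𝕜} {F₀ : 𝕜 → 𝕜}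
    {K : Set 𝕜} {b : ℕ → ℝ} {R : ℝ}
    (hF : ∀ i, ∀ z ∈ K, HasSum (fun n => a i n * z ^ n) (F i z))
    (hF₀ : ∀ z ∈ K, HasSum (fun n => a₀ n * z ^ n) (F₀ z))
    (ha : ∀ n, Tendsto (a · n) l (𝓝 (a₀ n))) (hb : ∀ᶠ i in l, ∀ n, ‖a i n‖ ≤ b n)
    (hK : ∀ z ∈ K, ‖z‖ ≤ R) (hbR : Summable fun n => b n * R ^ n) :
    TendstoUniformlyOn F F₀ l K := by
  have hb₀ (n : ℕ) : ‖a₀ n‖ ≤ b n := le_of_tendsto (ha n).norm (hb.mono fun i hi => hi n)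
  have hpow : ∀ᶠ x in l ×ˢ 𝓟 K, ∀ n : ℕ, ‖x.2 ^ n‖ ≤ R ^ n :=
    tendsto_snd.eventually (p := fun z => ∀ n : ℕ, ‖z ^ n‖ ≤ R ^ n)
      (eventually_principal.2 fun z hz n => by
        rw [norm_pow]; exact pow_le_pow_left₀ (norm_nonneg z) (hK z hz) n)
  -- Tannery's theorem along `l ×ˢ 𝓟 K` is exactly uniform convergence on `K`.
  have hdiff :
      Tendsto (fun x : ι × 𝕜 => ∑' n, (a₀ n - a x.1 n) * x.2 ^ n) (l ×ˢ 𝓟 K) (𝓝 0) := by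
    refine tsum_zero (α := 𝕜) (β := ℕ) ▸ tendsto_tsum_of_dominated_convergence
      (bound := fun n => 2 * (b n * R ^ n)) (hbR.mul_left 2) (fun n => ?_) ?_
    · have hlim :=
        (((ha n).const_sub (a₀ n)).comp (tendsto_fst (g := 𝓟 K))).norm.mul_const (R ^ n)
      rw [sub_self, norm_zero, zero_mul] at hlim
      refine squeeze_zero_norm' (hpow.mono fun x hx => ?_) hlim
      rw [norm_mul]
      exact mul_le_mul_of_nonneg_left (hx n) (norm_nonneg _)
    · filter_upwards [tendsto_fst.eventually hb, hpow] with x hbx hx n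
      rw [norm_mul, ← mul_assoc, two_mul]
      exact mul_le_mul ((norm_sub_le _ _).trans (add_le_add (hb₀ n) (hbx n))) (hx n)
        (norm_nonneg _) (by linarith [(norm_nonneg _).trans (hb₀ n)])
  rw [Metric.tendstoUniformlyOn_iff]
  intro ε hε
  have hsmall := hdiff.norm.eventually (gt_mem_nhds (by simpa using hε))
  filter_upwards [eventually_prod_principal_iff.1 hsmall] with i hi z hz
  rw [dist_eq_norm, ← ((hF₀ z hz).sub (hF i z hz)).tsum_eq]
  simpa only [sub_mul] using hi z hz

lemma exists_pos_mul_le_abs {p : ℝ} (hp : ∀ k : ℕ, p ≠ -((k : ℝ) + 1) / 2) :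
    ∃ c > 0, ∀ n : ℕ, c * (n + 1) ≤ |2 * p + n + 1| := by
  obtain ⟨N, hN⟩ := exists_nat_ge (4 * |p|)
  have hne (n : ℕ) : 0 < |2 * p + n + 1| := abs_pos.2 fun h => hp n (by linarith)
  set δ := (Finset.range (N + 1)).inf' ⟨0, by simp⟩ fun n => |2 * p + n + 1|
  have hδ : 0 < δ := (Finset.lt_inf'_iff _).2 fun n _ => hne n
  refine ⟨min (1 / 2) (δ / (N + 1)), by positivity, fun n => ?_⟩
  rcases lt_or_ge n N with hn | hn
  · calc min (1 / 2) (δ / (N + 1)) * (n + 1) ≤ δ / (N + 1) * (N + 1) := by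
          gcongr
          exact min_le_right _ _
      _ = δ := by field_simp
      _ ≤ |2 * p + n + 1| := Finset.inf'_le _ (Finset.mem_range.2 (by omega))
  · have hn' : (N : ℝ) ≤ n := by exact_mod_cast hn
    calc min (1 / 2) (δ / (N + 1)) * (n + 1) ≤ 1 / 2 * (n + 1) := by gcongr; exact min_le_left _ _
      _ ≤ 2 * p + n + 1 := by linarith [neg_abs_le p]
      _ ≤ |2 * p + n + 1| := le_abs_self _

lemma exists_pos_eventually_mul_le_abs {p : ℝ} (hp : ∀ k : ℕ, p ≠ -((k : ℝ) + 1) / 2) :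
    ∃ c > 0, ∀ᶠ q : ℝ in 𝓝 p, ∀ n : ℕ, c * (n + 1) ≤ |2 * q + n + 1| := by
  obtain ⟨c, hc, hcp⟩ := exists_pos_mul_le_abs hp
  refine ⟨c / 2, by positivity, ?_⟩
  filter_upwards [Metric.ball_mem_nhds p (by positivity : 0 < c / 4)] with q hq n
  rw [Metric.mem_ball, Real.dist_eq] at hq
  have hn : (0 : ℝ) ≤ n := n.cast_nonneg
  calc c / 2 * (n + 1) ≤ c * (n + 1) - 2 * |q - p| := by nlinarith
    _ ≤ |2 * p + n + 1| - |2 * (p - q)| := by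
        rw [abs_mul, abs_two, abs_sub_comm]; linarith [hcp n]
    _ ≤ |2 * q + n + 1| := by
        have := abs_sub_abs_le_abs_sub (2 * p + n + 1) (2 * q + n + 1)
        rw [show 2 * p + n + 1 - (2 * q + n + 1) = 2 * (p - q) by ring] at this
        linarith

lemma SatRec.succ_eq_s4 {p ψ : ℝ} {P : Matrix (Fin 2) (Fin 2) ℝ} {α β : ℕ → ℝ}
    (h : SatRec p P ψ α β) {n : ℕ} (hd : 2 * p + n + 1 ≠ 0) :
    (n + 1) * (2 * p + n + 1) * α (n + 1) =
        -(α n * (P 0 1 * (2 * p + n + 1) - P 0 0 * ψ) +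
          β n * (P 1 1 * (2 * p + n + 1) - P 1 0 * ψ)) ∧
      (2 * p + n + 1) * β (n + 1) = α n * P 0 0 + β n * P 1 0 := by
  have hα := congrFun (congrFun (h.2.2 n) 0) 0
  have hβ := congrFun (congrFun (h.2.2 n) 0) 1
  simp only [Fin.isValue, of_apply, cons_val', cons_val_zero, cons_val_fin_one, matJ, cons_mul,
    Nat.succ_eq_add_one, Nat.reduceAdd, empty_mul, Equiv.symm_apply_apply, Matrix.smul_apply,
    vecMul, dotProduct, Matrix.mul_apply, Fin.sum_univ_two, cons_val_one, mul_zero, mul_one,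
    zero_add, mul_neg, add_zero, neg_mul, smul_eq_mul, Finset.sum_neg_distrib, neg_add_rev] at hα hβ
  rw [hα, hβ]
  constructor <;> field_simp <;> ring

lemma SatRec.succ_mul_le {p ψ : ℝ} {P : Matrix (Fin 2) (Fin 2) ℝ} {α β : ℕ → ℝ}
    (h : SatRec p P ψ α β) {c M : ℝ} (hc : 0 < c)
    (hd : ∀ n : ℕ, c * (n + 1) ≤ |2 * p + n + 1|) (hP : ∀ a b, |P a b| ≤ M) (hψ : |ψ| ≤ M)
    (n : ℕ) :
    (n + 1) * (|α (n + 1)| + |β (n + 1)|) ≤ M * (1 + (M + 1) / c) * (|α n| + |β n|) := by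
  set d := 2 * p + n + 1
  set s := |α n| + |β n|
  have hdc : c * (n + 1) ≤ |d| := hd n
  have hd0 : 0 < |d| := lt_of_lt_of_le (by positivity) hdc
  have hM : 0 ≤ M := (abs_nonneg ψ).trans hψ
  obtain ⟨hα, hβ⟩ := h.succ_eq_s4 (abs_pos.1 hd0)
  have hentry (a : Fin 2) : |P a 1 * d - P a 0 * ψ| ≤ M * |d| + M * M := by
    calc |P a 1 * d - P a 0 * ψ| ≤ |P a 1| * |d| + |P a 0| * |ψ| := by
          simpa only [abs_mul] using abs_sub (P a 1 * d) (P a 0 * ψ)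
      _ ≤ M * |d| + M * M := by gcongr <;> simp only [hP]
  have hA : (n + 1) * |d| * |α (n + 1)| ≤ s * (M * |d| + M * M) := by
    have := congrArg abs hα
    rw [abs_neg, abs_mul, abs_mul, abs_of_pos (by positivity : (0 : ℝ) < n + 1)] at this
    rw [this]
    exact abs_mul_add_mul_le (hentry 0) (hentry 1)
  have hB : |d| * |β (n + 1)| ≤ s * M := by
    rw [← abs_mul, hβ]
    exact abs_mul_add_mul_le (hP 0 0) (hP 1 0)
  have hcd : (n + 1) * (M * (M + 1) * s) ≤ |d| / c * (M * (M + 1) * s) := by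
    gcongr
    rwa [le_div_iff₀ hc, mul_comm]
  have hnMs : 0 ≤ n * M * M * s := by positivity
  refine le_of_mul_le_mul_left ?_ hd0
  calc |d| * ((n + 1) * (|α (n + 1)| + |β (n + 1)|))
      = (n + 1) * |d| * |α (n + 1)| + (n + 1) * (|d| * |β (n + 1)|) := by ring
    _ ≤ s * (M * |d| + M * M) + (n + 1) * (s * M) := by gcongr
    _ ≤ M * s * |d| + |d| / c * (M * (M + 1) * s) := by linarith
    _ = |d| * (M * (1 + (M + 1) / c) * s) := by ring

lemma SatRec.abs_add_abs_le {p ψ : ℝ} {P : Matrix (Fin 2) (Fin 2) ℝ} {α β : ℕ → ℝ}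
    (h : SatRec p P ψ α β) {c M : ℝ} (hc : 0 < c)
    (hd : ∀ n : ℕ, c * (n + 1) ≤ |2 * p + n + 1|) (hP : ∀ a b, |P a b| ≤ M) (hψ : |ψ| ≤ M)
    (n : ℕ) : |α n| + |β n| ≤ (M * (1 + (M + 1) / c)) ^ n / n ! := by
  have hM : 0 ≤ M := (abs_nonneg ψ).trans hψ
  refine le_pow_div_factorial_of_succ_mul_le (s := fun n => |α n| + |β n|) (by positivity) ?_
    (h.succ_mul_le hc hd hP hψ) n
  simp [h.1, h.2.1]

lemma SatRec.tendsto_row {ι : Type*} {l : Filter ι} {q : ι → ℝ} {Q : ι → Matrix (Fin 2) (Fin 2) ℝ}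
    {θ : ι → ℝ} {a b : ι → ℕ → ℝ} {p ψ : ℝ} {P : Matrix (Fin 2) (Fin 2) ℝ} {α β : ℕ → ℝ}
    (hrecs : ∀ i, SatRec (q i) (Q i) (θ i) (a i) (b i)) (hrec : SatRec p P ψ α β)
    (hp : ∀ k : ℕ, p ≠ -((k : ℝ) + 1) / 2)
    (hq : Tendsto q l (𝓝 p)) (hQ : Tendsto Q l (𝓝 P)) (hθ : Tendsto θ l (𝓝 ψ)) (n : ℕ) :
    Tendsto (fun i => !![a i n, b i n]) l (𝓝 !![α n, β n]) := by
  induction n with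
  | zero => simp only [(hrecs _).1, (hrecs _).2.1, hrec.1, hrec.2.1]; exact tendsto_const_nhds
  | succ n ih =>
    simp only [(hrecs _).2.2 n, hrec.2.2 n]
    have hd : ((n : ℝ) + 1) * (2 * p + n + 1) ≠ 0 :=
      mul_ne_zero (by positivity) fun h => hp n (by linarith)
    have hq' : Tendsto (fun i => 2 * q i + (n : ℝ) + 1) l (𝓝 (2 * p + n + 1)) :=
      ((hq.const_mul 2).add_const _).add_const _
    have hN : Tendsto (fun i => !![2 * q i + (n : ℝ) + 1, 0; θ i, (n : ℝ) + 1]) l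
        (𝓝 !![2 * p + (n : ℝ) + 1, 0; ψ, (n : ℝ) + 1]) :=
      (hq'.matrixVecCons tendsto_const_nhds).matrixVecCons
        ((hθ.matrixVecCons tendsto_const_nhds).matrixVecCons tendsto_const_nhds)
    have hrow := ((continuous_fst.matrix_mul continuous_snd).tendsto _).comp
      (ih.prodMk_nhds ((hQ.mul_const matJ).mul hN))
    exact (tendsto_const_nhds.div (hq'.const_mul _) hd).smul hrow

lemma SatRec.tendsto_coeff {ι : Type*} {l : Filter ι} {q : ι → ℝ} {Q : ι → Matrix (Fin 2) (Fin 2) ℝ}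
    {θ : ι → ℝ} {a b : ι → ℕ → ℝ} {p ψ : ℝ} {P : Matrix (Fin 2) (Fin 2) ℝ} {α β : ℕ → ℝ}
    (hrecs : ∀ i, SatRec (q i) (Q i) (θ i) (a i) (b i)) (hrec : SatRec p P ψ α β)
    (hp : ∀ k : ℕ, p ≠ -((k : ℝ) + 1) / 2)
    (hq : Tendsto q l (𝓝 p)) (hQ : Tendsto Q l (𝓝 P)) (hθ : Tendsto θ l (𝓝 ψ)) (n : ℕ) :
    Tendsto (a · n) l (𝓝 (α n)) ∧ Tendsto (b · n) l (𝓝 (β n)) := by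
  have h := SatRec.tendsto_row hrecs hrec hp hq hQ hθ n
  exact ⟨((continuous_apply_apply 0 0).tendsto _).comp h,
    ((continuous_apply_apply 0 1).tendsto _).comp h⟩

attribute [local instance] Matrix.normedAddCommGroup

theorem statement4_general (pi : ℕ → ℝ) (Pi : ℕ → Matrix (Fin 2) (Fin 2) ℝ) (psii : ℕ → ℝ)
    (p : ℝ) (P : Matrix (Fin 2) (Fin 2) ℝ) (ψ : ℝ)
    (hp : ∀ k : ℕ, p ≠ -((k : ℝ) + 1) / 2)
    (hpc : Tendsto pi atTop (nhds p))
    (hPc : Tendsto Pi atTop (nhds P))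
    (hψc : Tendsto psii atTop (nhds ψ))
    (αi βi : ℕ → ℕ → ℝ) (α β : ℕ → ℝ)
    (hreci : ∀ i : ℕ, SatRec (pi i) (Pi i) (psii i) (αi i) (βi i))
    (hrec : SatRec p P ψ α β)
    (Ai Bi : ℕ → ℂ → ℂ) (A B : ℂ → ℂ)
    (hAi : ∀ i : ℕ, ∀ z : ℂ, HasSum (fun n : ℕ => (αi i n : ℂ) * z ^ n) (Ai i z))
    (hBi : ∀ i : ℕ, ∀ z : ℂ, HasSum (fun n : ℕ => (βi i n : ℂ) * z ^ n) (Bi i z))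
    (hA : ∀ z : ℂ, HasSum (fun n : ℕ => (α n : ℂ) * z ^ n) (A z))
    (hB : ∀ z : ℂ, HasSum (fun n : ℕ => (β n : ℂ) * z ^ n) (B z)) :
    ∀ K : Set ℂ, IsCompact K →
      TendstoUniformlyOn (fun i => Ai i) A atTop K ∧
      TendstoUniformlyOn (fun i => Bi i) B atTop K := by
  intro K hK
  obtain ⟨c, hc, hcp⟩ := exists_pos_eventually_mul_le_abs hp
  set M := max (‖P‖ + 1) (|ψ| + 1)
  set G := M * (1 + (M + 1) / c)
  have hbound : ∀ᶠ i in atTop, ∀ n, |αi i n| + |βi i n| ≤ G ^ n / n ! := by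
    filter_upwards [hpc.eventually hcp, hPc.norm.eventually (gt_mem_nhds (lt_add_one ‖P‖)),
      hψc.abs.eventually (gt_mem_nhds (lt_add_one |ψ|))] with i hci hPi hψi
    refine (hreci i).abs_add_abs_le hc hci (fun a b => ?_) (hψi.le.trans (le_max_right _ _))
    rw [← Real.norm_eq_abs]
    exact (norm_entry_le_entrywise_sup_norm _).trans (hPi.le.trans (le_max_left _ _))
  obtain ⟨R, hR⟩ := hK.isBounded.exists_norm_le
  have hsum : Summable fun n => G ^ n / n ! * R ^ n := by
    simpa only [div_mul_eq_mul_div, mul_pow] using Real.summable_pow_div_factorial (G * R)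
  have hcoeff := SatRec.tendsto_coeff hreci hrec hp hpc hPc hψc
  have hcast (x : ℝ) : Tendsto Complex.ofReal (𝓝 x) (𝓝 x) := Complex.continuous_ofReal.tendsto x
  constructor
  · refine tendstoUniformlyOn_of_tendsto_coeff (fun i z _ => hAi i z) (fun z _ => hA z)
      (fun n => (hcast _).comp (hcoeff n).1) (hbound.mono fun i h n => ?_) hR hsum
    rw [Complex.norm_real, Real.norm_eq_abs]
    exact (le_add_of_nonneg_right (abs_nonneg _)).trans (h n)
  · refine tendstoUniformlyOn_of_tendsto_coeff (fun i z _ => hBi i z) (fun z _ => hB z)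
      (fun n => (hcast _).comp (hcoeff n).2) (hbound.mono fun i h n => ?_) hR hsum
    rw [Complex.norm_real, Real.norm_eq_abs]
    exact (le_add_of_nonneg_left (abs_nonneg _)).trans (h n)

/-- continuity of (p,P,ψ) ↦ Ξₚ(P,ψ) with respect to locally uniform
convergence of the generating functions. -/
theorem statement4 (pi : ℕ → ℝ) (Pi : ℕ → Matrix (Fin 2) (Fin 2) ℝ) (psii : ℕ → ℝ)
    (p : ℝ) (P : Matrix (Fin 2) (Fin 2) ℝ) (ψ : ℝ)
    (hpi : ∀ i k : ℕ, pi i ≠ -((k : ℝ) + 1) / 2)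
    (hp : ∀ k : ℕ, p ≠ -((k : ℝ) + 1) / 2)
    (hpc : Tendsto pi atTop (nhds p))
    (hPc : Tendsto Pi atTop (nhds P))
    (hψc : Tendsto psii atTop (nhds ψ))
    (αi βi : ℕ → ℕ → ℝ) (α β : ℕ → ℝ)
    (hreci : ∀ i : ℕ, SatRec (pi i) (Pi i) (psii i) (αi i) (βi i))
    (hrec : SatRec p P ψ α β)
    (Ai Bi : ℕ → ℂ → ℂ) (A B : ℂ → ℂ)
    (hAi : ∀ i : ℕ, ∀ z : ℂ, HasSum (fun n : ℕ => (αi i n : ℂ) * z ^ n) (Ai i z))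
    (hBi : ∀ i : ℕ, ∀ z : ℂ, HasSum (fun n : ℕ => (βi i n : ℂ) * z ^ n) (Bi i z))
    (hA : ∀ z : ℂ, HasSum (fun n : ℕ => (α n : ℂ) * z ^ n) (A z))
    (hB : ∀ z : ℂ, HasSum (fun n : ℕ => (β n : ℂ) * z ^ n) (B z)) :
    ∀ K : Set ℂ, IsCompact K →
      TendstoUniformlyOn (fun i => Ai i) A atTop K ∧
      TendstoUniformlyOn (fun i => Bi i) B atTop K :=
  statement4_general pi Pi psii p P ψ hp hpc hPc hψc αi βi α β hreci hrec Ai Bi A B hAi hBi hA hB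
end
end

section
/- Let p ∈ ℝ with p ∉ {−(k+1)/2 : k ∈ ℕ₀}, let P be a real 2×2 matrix, ψ ∈ ℝ, and γ ∈ ℝ. Let ((αₙ,βₙ))ₙ≥₀ be the solution of the recurrence (R) for the data (P,ψ), and let ((α̃ₙ,β̃ₙ))ₙ≥₀ be the solution of (R) for the data ([[1,0],[γ,1]]·P·[[1,γ],[0,1]], ψ + 2pγ). Then for all n ≥ 0: αₙ = α̃ₙ + γ·β̃ₙ and βₙ = β̃ₙ; equivalently, Ξₚ(P,ψ) = Ξₚ([[1,0],[γ,1]]·P·[[1,γ],[0,1]], ψ+2pγ)·[[1,0],[γ,1]]. -/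
open Matrix MeasureTheory Filter

noncomputable section

/-- behaviour of the recurrence under the transformation
P ↦ [[1,0],[γ,1]]·P·[[1,γ],[0,1]], ψ ↦ ψ + 2pγ. -/
theorem statement7 (p : ℝ) (hp : ∀ k : ℕ, p ≠ -((k : ℝ) + 1) / 2)
    (P : Matrix (Fin 2) (Fin 2) ℝ) (ψ γ : ℝ) (α β αt βt : ℕ → ℝ)
    (h1 : SatRec p P ψ α β)
    (h2 : SatRec p (!![1, 0; γ, 1] * P * !![1, γ; 0, 1]) (ψ + 2 * p * γ) αt βt) :
    ∀ n : ℕ, α n = αt n + γ * βt n ∧ β n = βt n := by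
  obtain ⟨ha0, hb0, hrec⟩ := h1
  obtain ⟨hat0, hbt0, hrect⟩ := h2
  intro n
  induction n with
  | zero => constructor <;> simp [ha0, hb0, hat0, hbt0]
  | succ n ih =>
    obtain ⟨ihα, ihβ⟩ := ih
    have e1 := congrFun (congrFun (hrec n) 0) 0
    have e2 := congrFun (congrFun (hrec n) 0) 1
    have e3 := congrFun (congrFun (hrect n) 0) 0
    have e4 := congrFun (congrFun (hrect n) 0) 1
    simp [Matrix.mul_apply, Matrix.vecMul, dotProduct, matJ, Fin.sum_univ_succ, Matrix.smul_apply] at e1 e2 e3 e4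
    constructor
    · rw [e1, e3, e4, ihα, ihβ]; ring
    · rw [e2, e4, ihα, ihβ]; ring
end
end

section
/- Let p ∈ ℝ, ψ ∈ ℝ, and let P be a real 2×2 matrix with ker P = span{ξ} for some nonzero ξ ∈ ℝ². Then: (i) if p ≠ 0: when ξ is a scalar multiple of (1,0)ᵀ or of (−ψ,2p)ᵀ, one has ker H_{P,ψ}(a) = span{ξ} for all a > 0; otherwise ker H_{P,ψ}(a) ≠ ker H_{P,ψ}(b) for any 0 < a < b < ∞. (ii) if p = 0 and ψ ≠ 0: when ξ is a scalar multiple of (1,0)ᵀ, one has ker H_{P,ψ}(a) = span{ξ} for all a > 0; otherwise ker H_{P,ψ}(a) ≠ ker H_{P,ψ}(b) for any 0 < a < b < ∞. (iii) if p = 0 and ψ = 0, then ker H_{P,ψ}(a) = span{ξ} for all a > 0. -/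
open Matrix MeasureTheory Filter

noncomputable section

/-!
Since `𝒟_ψ(a)` is invertible, `ker H_{P,ψ}(a) = 𝒟_ψ(a)⁻ᵀ (ker P)`, and `a ↦ 𝒟_ψ(a)` is a
one-parameter group, so `ker H_{P,ψ}(a)` is the line spanned by `𝒟_ψ(a⁻¹)ᵀ ξ`. Two lines in `ℝ²`
agree iff the determinant of their generators vanishes. For `p ≠ 0` this determinant at `a, b` is
a nonzero multiple of `ξ₁ (2p ξ₀ + ψ ξ₁) (b^{2p} - a^{2p})`, for `p = 0` it is
`ψ ξ₁² (log b - log a)`; the cases `ker H_{P,ψ}(a) = span{ξ}` are those with `b = 1`,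
as `H_{P,ψ}(1) = P`.
-/

open Submodule

theorem mem_span_singleton_iff_cross_eq_zero {K : Type*} [Field K] {u v : Fin 2 → K}
    (hv : v ≠ 0) : u ∈ span K {v} ↔ u 0 * v 1 - u 1 * v 0 = 0 := by
  rw [mem_span_singleton]
  constructor
  · rintro ⟨c, rfl⟩
    simp only [Pi.smul_apply, smul_eq_mul]
    ring
  · intro h
    have hv' : v 0 ≠ 0 ∨ v 1 ≠ 0 := by
      by_contra! h0
      exact hv (funext <| Fin.forall_fin_two.mpr h0)
    rcases hv' with h0 | h1
    · refine ⟨u 0 / v 0, funext <| Fin.forall_fin_two.mpr ⟨?_, ?_⟩⟩ <;>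
        simp only [Pi.smul_apply, smul_eq_mul] <;> field_simp
      linear_combination h
    · refine ⟨u 1 / v 1, funext <| Fin.forall_fin_two.mpr ⟨?_, ?_⟩⟩ <;>
        simp only [Pi.smul_apply, smul_eq_mul] <;> field_simp
      linear_combination -h

theorem span_singleton_eq_span_singleton_iff_cross_eq_zero {K : Type*} [Field K]
    {u v : Fin 2 → K} (hu : u ≠ 0) (hv : v ≠ 0) :
    span K {u} = span K {v} ↔ u 0 * v 1 - u 1 * v 0 = 0 := by
  rw [le_antisymm_iff, span_singleton_le_iff_mem, span_singleton_le_iff_mem,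
    mem_span_singleton_iff_cross_eq_zero hv, mem_span_singleton_iff_cross_eq_zero hu]
  exact ⟨And.left, fun h => ⟨h, by linear_combination -h⟩⟩

theorem Matrix.ker_mul_mul_transpose {n K : Type*} [Fintype n] [DecidableEq n] [Field K]
    {M N P : Matrix n n K} (hNM : N * M = 1) {ξ : n → K}
    (hker : LinearMap.ker P.mulVecLin = span K {ξ}) :
    LinearMap.ker (M * P * Mᵀ).mulVecLin = span K {Nᵀ *ᵥ ξ} := by
  have hMNt : Mᵀ * Nᵀ = 1 := by rw [← transpose_mul, hNM, transpose_one]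
  have hNMt : Nᵀ * Mᵀ = 1 := mul_eq_one_comm.mp hMNt
  have hmem (y : n → K) : y ∈ span K {ξ} ↔ P *ᵥ y = 0 := by
    rw [← hker, LinearMap.mem_ker, mulVecLin_apply]
  ext x
  rw [LinearMap.mem_ker, mulVecLin_apply, ← mulVec_mulVec, ← mulVec_mulVec,
    mem_span_singleton]
  constructor
  · intro hx
    have hPx : P *ᵥ (Mᵀ *ᵥ x) = 0 := by
      simpa only [mulVec_mulVec _ N M, hNM, one_mulVec, mulVec_zero] using congrArg (N *ᵥ ·) hx
    obtain ⟨c, hc⟩ := mem_span_singleton.mp ((hmem _).mpr hPx)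
    refine ⟨c, ?_⟩
    rw [← mulVec_smul, hc, mulVec_mulVec, hNMt, one_mulVec]
  · rintro ⟨c, rfl⟩
    rw [mulVec_smul, mulVec_mulVec _ Mᵀ Nᵀ, hMNt, one_mulVec, mulVec_smul,
      (hmem ξ).mp (mem_span_singleton_self ξ), smul_zero, mulVec_zero]

theorem Dpsi_zero (ψ a : ℝ) : Dpsi 0 ψ a = !![1, 0; ψ * Real.log a, 1] := if_pos rfl

theorem Dpsi_of_ne_zero {p : ℝ} (hp : p ≠ 0) (ψ : ℝ) {a : ℝ} (ha : 0 < a) :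
    Dpsi p ψ a = !![a ^ p, 0; ψ / (2 * p) * (a ^ p - (a ^ p)⁻¹), (a ^ p)⁻¹] := by
  rw [Dpsi, if_neg hp, Real.rpow_neg ha.le]
  ext i j
  fin_cases i <;> fin_cases j <;> simp [mul_apply, Fin.sum_univ_two]
  ring

theorem Dpsi_mul (p ψ : ℝ) {a b : ℝ} (ha : 0 < a) (hb : 0 < b) :
    Dpsi p ψ (a * b) = Dpsi p ψ a * Dpsi p ψ b := by
  rcases eq_or_ne p 0 with rfl | hp
  · rw [Dpsi_zero, Dpsi_zero, Dpsi_zero, Real.log_mul ha.ne' hb.ne']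
    ext i j
    fin_cases i <;> fin_cases j <;> simp [mul_apply, Fin.sum_univ_two]
    ring
  · have hs : 0 < a ^ p := Real.rpow_pos_of_pos ha p
    have hr : 0 < b ^ p := Real.rpow_pos_of_pos hb p
    rw [Dpsi_of_ne_zero hp ψ ha, Dpsi_of_ne_zero hp ψ hb, Dpsi_of_ne_zero hp ψ (mul_pos ha hb),
      Real.mul_rpow ha.le hb.le]
    ext i j
    fin_cases i <;> fin_cases j <;> simp [mul_apply, Fin.sum_univ_two] <;> field_simp
    ring

theorem Dpsi_one (p ψ : ℝ) : Dpsi p ψ 1 = 1 := by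
  rcases eq_or_ne p 0 with rfl | hp
  · rw [Dpsi_zero, Real.log_one, mul_zero, one_fin_two]
  · rw [Dpsi_of_ne_zero hp ψ one_pos, Real.one_rpow, inv_one, sub_self, mul_zero,
      one_fin_two]

theorem HPpsi_one (p ψ : ℝ) (P : Matrix (Fin 2) (Fin 2) ℝ) : HPpsi p ψ P 1 = P := by
  rw [HPpsi, Dpsi_one, transpose_one, Matrix.one_mul, Matrix.mul_one]

section Kernel

variable {p ψ : ℝ} {P : Matrix (Fin 2) (Fin 2) ℝ} {ξ : Fin 2 → ℝ}

theorem ker_HPpsi (hker : LinearMap.ker P.mulVecLin = span ℝ {ξ}) {a : ℝ} (ha : 0 < a) :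
    LinearMap.ker (HPpsi p ψ P a).mulVecLin = span ℝ {(Dpsi p ψ a⁻¹)ᵀ *ᵥ ξ} :=
  Matrix.ker_mul_mul_transpose (by
    rw [← Dpsi_mul p ψ (inv_pos.mpr ha) ha, inv_mul_cancel₀ ha.ne', Dpsi_one]) hker

theorem ker_HPpsi_eq_ker_iff (hξ : ξ ≠ 0) (hker : LinearMap.ker P.mulVecLin = span ℝ {ξ})
    {a b : ℝ} (ha : 0 < a) (hb : 0 < b) :
    LinearMap.ker (HPpsi p ψ P a).mulVecLin = LinearMap.ker (HPpsi p ψ P b).mulVecLin ↔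
      ((Dpsi p ψ a⁻¹)ᵀ *ᵥ ξ) 0 * ((Dpsi p ψ b⁻¹)ᵀ *ᵥ ξ) 1 -
        ((Dpsi p ψ a⁻¹)ᵀ *ᵥ ξ) 1 * ((Dpsi p ψ b⁻¹)ᵀ *ᵥ ξ) 0 = 0 := by
  have hne {t : ℝ} (ht : 0 < t) : (Dpsi p ψ t⁻¹)ᵀ *ᵥ ξ ≠ 0 := by
    intro h
    apply hξ
    rw [← one_mulVec ξ, ← transpose_one, ← Dpsi_one p ψ, ← inv_mul_cancel₀ ht.ne',
      Dpsi_mul p ψ (inv_pos.mpr ht) ht, transpose_mul, ← mulVec_mulVec, h,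
      mulVec_zero]
  rw [ker_HPpsi hker ha, ker_HPpsi hker hb,
    span_singleton_eq_span_singleton_iff_cross_eq_zero (hne ha) (hne hb)]

theorem ker_HPpsi_eq_ker_iff_of_ne_zero (hp : p ≠ 0) (hξ : ξ ≠ 0)
    (hker : LinearMap.ker P.mulVecLin = span ℝ {ξ}) {a b : ℝ} (ha : 0 < a) (hb : 0 < b) :
    LinearMap.ker (HPpsi p ψ P a).mulVecLin = LinearMap.ker (HPpsi p ψ P b).mulVecLin ↔
      ξ 1 = 0 ∨ 2 * p * ξ 0 + ψ * ξ 1 = 0 ∨ a = b := by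
  have hs : 0 < a ^ p := Real.rpow_pos_of_pos ha p
  have hr : 0 < b ^ p := Real.rpow_pos_of_pos hb p
  have hcross : ((a ^ p)⁻¹ * ξ 0 + ψ / (2 * p) * ((a ^ p)⁻¹ - a ^ p) * ξ 1) * (b ^ p * ξ 1) -
      a ^ p * ξ 1 * ((b ^ p)⁻¹ * ξ 0 + ψ / (2 * p) * ((b ^ p)⁻¹ - b ^ p) * ξ 1) =
      ξ 1 * (2 * p * ξ 0 + ψ * ξ 1) * ((b ^ p) ^ 2 - (a ^ p) ^ 2) / (2 * p * a ^ p * b ^ p) := by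
    field_simp
    ring
  rw [ker_HPpsi_eq_ker_iff hξ hker ha hb, Dpsi_of_ne_zero hp ψ (inv_pos.mpr ha),
    Dpsi_of_ne_zero hp ψ (inv_pos.mpr hb), Real.inv_rpow ha.le, Real.inv_rpow hb.le]
  simp only [mulVec_fin_two, transpose_apply, of_apply, cons_val', cons_val_zero, cons_val_one,
    cons_val_fin_one, inv_inv, zero_mul, zero_add]
  rw [hcross, div_eq_zero_iff, or_iff_left (by positivity), mul_eq_zero, mul_eq_zero, or_assoc,
    sub_eq_zero, pow_left_inj₀ hr.le hs.le two_ne_zero, Real.rpow_left_inj hb.le ha.le hp,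
    eq_comm (a := b)]

theorem ker_HPpsi_zero_eq_ker_iff (hξ : ξ ≠ 0) (hker : LinearMap.ker P.mulVecLin = span ℝ {ξ})
    {a b : ℝ} (ha : 0 < a) (hb : 0 < b) :
    LinearMap.ker (HPpsi 0 ψ P a).mulVecLin = LinearMap.ker (HPpsi 0 ψ P b).mulVecLin ↔
      ψ = 0 ∨ ξ 1 = 0 ∨ a = b := by
  rw [ker_HPpsi_eq_ker_iff hξ hker ha hb, Dpsi_zero, Dpsi_zero, Real.log_inv, Real.log_inv]
  simp only [mulVec_fin_two, transpose_apply, of_apply, cons_val', cons_val_zero, cons_val_one,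
    cons_val_fin_one, zero_mul, one_mul, zero_add]
  rw [show (ξ 0 + ψ * -Real.log a * ξ 1) * ξ 1 - ξ 1 * (ξ 0 + ψ * -Real.log b * ξ 1) =
      ψ * ξ 1 ^ 2 * (Real.log b - Real.log a) by ring,
    mul_eq_zero, mul_eq_zero, or_assoc, pow_eq_zero_iff two_ne_zero, sub_eq_zero,
    Real.log_injOn_pos.eq_iff hb ha, eq_comm (a := b)]

end Kernel

/-- behaviour of the kernel of H_{P,ψ}(a) when ker P = span{ξ}. -/
theorem statement9 (p ψ : ℝ) (P : Matrix (Fin 2) (Fin 2) ℝ) (ξ : Fin 2 → ℝ)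
    (hξ : ξ ≠ 0)
    (hker : LinearMap.ker P.mulVecLin = Submodule.span ℝ {ξ}) :
    (p ≠ 0 →
      (((∃ c : ℝ, ξ = c • ![1, 0]) ∨ (∃ c : ℝ, ξ = c • ![-ψ, 2 * p])) →
        ∀ a : ℝ, 0 < a →
          LinearMap.ker (HPpsi p ψ P a).mulVecLin = Submodule.span ℝ {ξ}) ∧
      (¬ ((∃ c : ℝ, ξ = c • ![1, 0]) ∨ (∃ c : ℝ, ξ = c • ![-ψ, 2 * p])) →
        ∀ a b : ℝ, 0 < a → a < b →
          LinearMap.ker (HPpsi p ψ P a).mulVecLin ≠ LinearMap.ker (HPpsi p ψ P b).mulVecLin)) ∧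
    (p = 0 → ψ ≠ 0 →
      ((∃ c : ℝ, ξ = c • ![1, 0]) →
        ∀ a : ℝ, 0 < a →
          LinearMap.ker (HPpsi p ψ P a).mulVecLin = Submodule.span ℝ {ξ}) ∧
      (¬ (∃ c : ℝ, ξ = c • ![1, 0]) →
        ∀ a b : ℝ, 0 < a → a < b →
          LinearMap.ker (HPpsi p ψ P a).mulVecLin ≠ LinearMap.ker (HPpsi p ψ P b).mulVecLin)) ∧
    (p = 0 → ψ = 0 →
      ∀ a : ℝ, 0 < a →
        LinearMap.ker (HPpsi p ψ P a).mulVecLin = Submodule.span ℝ {ξ}) := by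
  have hspan : span ℝ {ξ} = LinearMap.ker (HPpsi p ψ P 1).mulVecLin := by rw [HPpsi_one, hker]
  have hmul {w : Fin 2 → ℝ} (hw : w ≠ 0) : (∃ c : ℝ, ξ = c • w) ↔ ξ 0 * w 1 - ξ 1 * w 0 = 0 := by
    simp_rw [eq_comm (a := ξ), ← mem_span_singleton, mem_span_singleton_iff_cross_eq_zero hw]
  have he₁ : (∃ c : ℝ, ξ = c • ![1, 0]) ↔ ξ 1 = 0 := by
    rw [hmul (by simp)]
    simp
  refine ⟨fun hp => ?_, fun hp hψ => ?_, fun hp hψ a ha => ?_⟩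
  · have he₂ : (∃ c : ℝ, ξ = c • ![-ψ, 2 * p]) ↔ 2 * p * ξ 0 + ψ * ξ 1 = 0 := by
      rw [hmul (by simp [hp])]
      simp only [cons_val_zero, cons_val_one]
      exact ⟨fun h => by linear_combination h, fun h => by linear_combination h⟩
    rw [he₁, he₂]
    refine ⟨fun h a ha => ?_, fun h a b ha hab => ?_⟩
    · rw [hspan, ker_HPpsi_eq_ker_iff_of_ne_zero hp hξ hker ha one_pos, ← or_assoc]
      exact Or.inl h
    · rw [Ne, ker_HPpsi_eq_ker_iff_of_ne_zero hp hξ hker ha (ha.trans hab), ← or_assoc]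
      exact not_or.mpr ⟨h, hab.ne⟩
  · subst hp
    rw [he₁]
    refine ⟨fun h a ha => ?_, fun h a b ha hab => ?_⟩
    · rw [hspan, ker_HPpsi_zero_eq_ker_iff hξ hker ha one_pos]
      exact Or.inr (Or.inl h)
    · rw [Ne, ker_HPpsi_zero_eq_ker_iff hξ hker ha (ha.trans hab)]
      exact not_or.mpr ⟨hψ, not_or.mpr ⟨h, hab.ne⟩⟩
  · subst hp
    rw [hspan, ker_HPpsi_zero_eq_ker_iff hξ hker ha one_pos]
    exact Or.inl hψ
end
end

section
/- Let p ∈ ℝ, ψ ∈ ℝ, and let P be a real 2×2 matrix. Concerning entrywise Lebesgue integrability of a ↦ H_{P,ψ}(a) on the interval (0,1): (i) if p ≤ −1/2, then H_{P,ψ} is integrable on (0,1) if and only if (1,0)·P·(1,0)ᵀ = 0; (ii) if −1/2 < p < 1/2, then H_{P,ψ} is integrable on (0,1); (iii) if p ≥ 1/2, then H_{P,ψ} is integrable on (0,1) if and only if (−ψ,2p)·P·(−ψ,2p)ᵀ = 0. -/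
open Matrix MeasureTheory Filter

noncomputable section

/-! For `p ≠ 0` put `c = ψ / (2p)`. Moving the diagonal factor of `𝒟_ψ(a)` past `P` gives
`H_{P,ψ}(a) = a^{2p} • P₀₀ uuᵀ + B + a^{-2p} • (q / (2p)²) e₁e₁ᵀ` with `u = (1, c)`, a constant `B`
and `q = (-ψ, 2p) P (-ψ, 2p)ᵀ`. Every entry is thus a combination of `a^{2p}`, `1` and `a^{-2p}`,
and `a^t` is integrable on `(0, 1)` exactly when `t > -1`. For `p = 0` the entries are polynomials
in `log a`, integrable because `|log a| ≤ a^{-t} / t` for every `t > 0`. -/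

open Set Real

lemma integrableOn_Ioo_rpow_mul_const_iff {s A : ℝ} :
    IntegrableOn (fun a : ℝ => a ^ s * A) (Ioo 0 1) ↔ A = 0 ∨ -1 < s := by
  rcases eq_or_ne A 0 with rfl | hA
  · simp
  · rw [IntegrableOn, integrable_mul_const_iff hA.isUnit, ← IntegrableOn,
      intervalIntegral.integrableOn_Ioo_rpow_iff one_pos]
    simp [hA]

lemma integrableOn_Ioo_rpow_add_const_add_rpow_neg_iff {s A B C : ℝ} :
    IntegrableOn (fun a : ℝ => a ^ s * A + B + a ^ (-s) * C) (Ioo 0 1) ↔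
      (A = 0 ∨ -1 < s) ∧ (C = 0 ∨ -1 < -s) := by
  have hB : IntegrableOn (fun _ : ℝ => B) (Ioo 0 1) := integrableOn_const measure_Ioo_lt_top.ne
  rcases le_or_gt s (-1) with hs | hs
  · have hC : IntegrableOn (fun a : ℝ => B + a ^ (-s) * C) (Ioo 0 1) :=
      hB.add (integrableOn_Ioo_rpow_mul_const_iff.2 (Or.inr (by linarith)))
    simp_rw [add_assoc]
    rw [IntegrableOn, integrable_add_iff_integrable_left' hC, ← IntegrableOn,
      integrableOn_Ioo_rpow_mul_const_iff]
    simp [show -1 < -s by linarith]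
  · have hA : IntegrableOn (fun a : ℝ => a ^ s * A + B) (Ioo 0 1) :=
      (integrableOn_Ioo_rpow_mul_const_iff.2 (Or.inr hs)).add hB
    rw [IntegrableOn, integrable_add_iff_integrable_right' hA, ← IntegrableOn,
      integrableOn_Ioo_rpow_mul_const_iff]
    simp [hs]

lemma integrableOn_Ioo_apply_iff_of_eq_rpow_smul {ι κ : Type*} {s : ℝ} {A B C : Matrix ι κ ℝ}
    {H : ℝ → Matrix ι κ ℝ} (hH : ∀ a, 0 < a → H a = a ^ s • A + B + a ^ (-s) • C) :
    (∀ i j, IntegrableOn (fun a => H a i j) (Ioo 0 1)) ↔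
      (A = 0 ∨ -1 < s) ∧ (C = 0 ∨ -1 < -s) := by
  have hcongr : ∀ i j, IntegrableOn (fun a => H a i j) (Ioo 0 1) ↔
      IntegrableOn (fun a : ℝ => a ^ s * A i j + B i j + a ^ (-s) * C i j) (Ioo 0 1) :=
    fun i j => integrableOn_congr_fun (fun a ha => by simp [hH a ha.1]) measurableSet_Ioo
  simp only [hcongr, integrableOn_Ioo_rpow_add_const_add_rpow_neg_iff, forall_and,
    forall_or_right, ← Matrix.ext_iff, Matrix.zero_apply]

lemma integrableOn_Ioo_log_pow (n : ℕ) : IntegrableOn (fun a => log a ^ n) (Ioo 0 1) := by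
  set t : ℝ := 1 / (2 * (n + 1))
  have ht : 0 < t := by positivity
  have htn : -1 < -(t * n) := by
    have : t * n < 1 := by
      rw [div_mul_eq_mul_div, one_mul, div_lt_one (by positivity)]; linarith
    linarith
  refine Integrable.mono' (((intervalIntegral.integrableOn_Ioo_rpow_iff one_pos).2 htn).const_mul
    (t⁻¹ ^ n)) (by fun_prop) ((ae_restrict_iff' measurableSet_Ioo).2 (ae_of_all _ ?_))
  rintro a ⟨ha0, ha1⟩
  have hlog : |log a| ≤ t⁻¹ * a ^ (-t) := by
    have hat := rpow_pos_of_pos ha0 t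
    have := abs_log_mul_self_rpow_lt a t ha0 ha1.le ht
    rw [abs_mul, abs_of_pos hat, ← lt_div_iff₀ hat] at this
    rw [rpow_neg ha0.le, ← mul_inv, ← one_div, ← div_div]
    exact this.le
  calc ‖log a ^ n‖ = |log a| ^ n := by rw [norm_pow, norm_eq_abs]
    _ ≤ (t⁻¹ * a ^ (-t)) ^ n := pow_le_pow_left₀ (abs_nonneg _) hlog n
    _ = t⁻¹ ^ n * a ^ (-(t * n)) := by
      rw [mul_pow, ← rpow_natCast (a ^ (-t)), ← rpow_mul ha0.le, neg_mul]

lemma HPpsi_eq_of_ne_zero {p : ℝ} (ψ : ℝ) (P : Matrix (Fin 2) (Fin 2) ℝ) (hp : p ≠ 0) :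
    ∃ B : Matrix (Fin 2) (Fin 2) ℝ, ∀ a, 0 < a →
      HPpsi p ψ P a = a ^ (2 * p) • (P 0 0 • vecMulVec ![1, ψ / (2 * p)] ![1, ψ / (2 * p)]) + B +
        a ^ (-(2 * p)) • single 1 1 ((![-ψ, 2 * p] ⬝ᵥ P *ᵥ ![-ψ, 2 * p]) / (2 * p) ^ 2) := by
  set c := ψ / (2 * p)
  refine ⟨!![0, P 0 1 - c * P 0 0; P 1 0 - c * P 0 0, c * (P 0 1 + P 1 0) - 2 * c ^ 2 * P 0 0],
    fun a ha => ?_⟩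
  have h2p : a ^ (2 * p) = a ^ p * a ^ p := by rw [two_mul, rpow_add ha]
  have hneg : a ^ (-p) = (a ^ p)⁻¹ := rpow_neg ha.le p
  have hneg2 : a ^ (-(2 * p)) = (a ^ p * a ^ p)⁻¹ := by rw [rpow_neg ha.le, h2p]
  have hψ : ψ = 2 * p * c := by simp only [c]; field_simp
  unfold HPpsi Dpsi
  rw [if_neg hp, hψ]
  ext i j
  simp only [Matrix.add_apply, Matrix.smul_apply, vecMulVec_apply, smul_eq_mul]
  fin_cases i <;> fin_cases j <;>
    simp [Matrix.mul_apply, Fin.sum_univ_two, dotProduct, vecMul, mulVec, h2p, hneg, hneg2] <;>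
    field_simp <;> ring

lemma HPpsi_zero_eq (ψ : ℝ) (P : Matrix (Fin 2) (Fin 2) ℝ) :
    ∃ M₁ M₂ : Matrix (Fin 2) (Fin 2) ℝ, ∀ a,
      HPpsi 0 ψ P a = P + log a • M₁ + log a ^ 2 • M₂ := by
  refine ⟨!![0, ψ * P 0 0; ψ * P 0 0, ψ * (P 0 1 + P 1 0)], !![0, 0; 0, ψ ^ 2 * P 0 0],
    fun a => ?_⟩
  unfold HPpsi Dpsi
  rw [if_pos rfl]
  ext i j
  fin_cases i <;> fin_cases j <;>
    simp [Matrix.mul_apply, Fin.sum_univ_two, vecMul, dotProduct] <;> ring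

lemma integrableOn_HPpsi_zero (ψ : ℝ) (P : Matrix (Fin 2) (Fin 2) ℝ) (i j : Fin 2) :
    IntegrableOn (fun a => HPpsi 0 ψ P a i j) (Ioo 0 1) := by
  obtain ⟨M₁, M₂, hH⟩ := HPpsi_zero_eq ψ P
  have hlog : IntegrableOn log (Ioo 0 1) := by simpa using integrableOn_Ioo_log_pow 1
  simp only [hH, Matrix.add_apply, Matrix.smul_apply, smul_eq_mul]
  exact ((integrableOn_const measure_Ioo_lt_top.ne).add (hlog.mul_const _)).add
    ((integrableOn_Ioo_log_pow 2).mul_const _)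

lemma integrableOn_HPpsi_iff {p : ℝ} (ψ : ℝ) (P : Matrix (Fin 2) (Fin 2) ℝ) (hp : p ≠ 0) :
    (∀ i j, IntegrableOn (fun a => HPpsi p ψ P a i j) (Ioo 0 1)) ↔
      (P 0 0 = 0 ∨ -1 < 2 * p) ∧ (![-ψ, 2 * p] ⬝ᵥ P *ᵥ ![-ψ, 2 * p] = 0 ∨ -1 < -(2 * p)) := by
  obtain ⟨B, hH⟩ := HPpsi_eq_of_ne_zero ψ P hp
  have hA : P 0 0 • vecMulVec ![1, ψ / (2 * p)] ![1, ψ / (2 * p)] = 0 ↔ P 0 0 = 0 :=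
    ⟨fun h => by simpa using congr_fun₂ h 0 0, fun h => by simp [h]⟩
  have hC : ∀ x : ℝ, single (1 : Fin 2) (1 : Fin 2) x = 0 ↔ x = 0 :=
    fun x => ⟨fun h => by simpa using congr_fun₂ h 1 1, fun h => by simp [h]⟩
  rw [integrableOn_Ioo_apply_iff_of_eq_rpow_smul hH, hA, hC, div_eq_zero_iff,
    or_iff_left (pow_ne_zero 2 (mul_ne_zero two_ne_zero hp))]

/-- integrability of H_{P,ψ} at the left endpoint 0, i.e. on (0,1). -/
theorem statement10 (p ψ : ℝ) (P : Matrix (Fin 2) (Fin 2) ℝ) :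
    (p ≤ -(1/2 : ℝ) →
      ((∀ i j : Fin 2, IntegrableOn (fun a => HPpsi p ψ P a i j) (Set.Ioo (0:ℝ) 1)) ↔
        P 0 0 = 0)) ∧
    (-(1/2 : ℝ) < p → p < 1/2 →
      (∀ i j : Fin 2, IntegrableOn (fun a => HPpsi p ψ P a i j) (Set.Ioo (0:ℝ) 1))) ∧
    ((1/2 : ℝ) ≤ p →
      ((∀ i j : Fin 2, IntegrableOn (fun a => HPpsi p ψ P a i j) (Set.Ioo (0:ℝ) 1)) ↔
        ![-ψ, 2 * p] ⬝ᵥ P.mulVec ![-ψ, 2 * p] = 0)) := by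
  refine ⟨fun hp => ?_, fun hp₁ hp₂ => ?_, fun hp => ?_⟩
  · have h₁ : ¬-1 < 2 * p := by linarith
    have h₂ : -1 < -(2 * p) := by linarith
    rw [integrableOn_HPpsi_iff ψ P (by linarith)]
    simp only [h₁, h₂, or_true, or_false, and_true]
  · rcases eq_or_ne p 0 with rfl | hp₀
    · exact integrableOn_HPpsi_zero ψ P
    · exact (integrableOn_HPpsi_iff ψ P hp₀).2 ⟨Or.inr (by linarith), Or.inr (by linarith)⟩
  · have h₁ : -1 < 2 * p := by linarith
    have h₂ : ¬-1 < -(2 * p) := by linarith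
    rw [integrableOn_HPpsi_iff ψ P (by linarith)]
    simp only [h₁, h₂, or_true, or_false, true_and]
end
end

section
/- Let p ∈ ℝ with p ∉ {−(k+1)/2 : k ∈ ℕ₀}, let P = [[κ₁,κ₃],[κ₃,κ₂]] be a real symmetric 2×2 matrix with det P ≠ 0, and let ψ ∈ ℝ. Let κ ∈ ℂ with κ² = det P, set σ := 2p·κ₃ − ψ·κ₁ and α := σ/(2iκ) + p, and let (A,B) = Ξₚ(P,ψ). Then for all z ∈ ℂ: A(z) = e^{iκz}·[ (1/2)·M(α, 2p+1, −2iκz) + (1/2)·M(α+1, 2p+1, −2iκz) − (κ₃/(2p+1))·z·M(α+1, 2p+2, −2iκz) ] and B(z) = e^{iκz}·(κ₁/(2p+1))·z·M(α+1, 2p+2, −2iκz). -/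
open Matrix MeasureTheory Filter

noncomputable section

/-- The rising factorial (Pochhammer symbol) (x)ₙ in ℂ. -/
def risingFac (x : ℂ) : ℕ → ℂ
  | 0 => 1
  | n + 1 => risingFac x n * (x + n)

/-- Kummer's confluent hypergeometric function M(a,b,z) = Σ (a)ₙ/(b)ₙ · zⁿ/n!. -/
def kummerM (a b z : ℂ) : ℂ :=
  ∑' n : ℕ, risingFac a n / risingFac b n * z ^ n / (n.factorial : ℂ)

/-- The confluent hypergeometric limit function ₀F₁(b,z) = Σ 1/(b)ₙ · zⁿ/n!. -/
def hyp0F1 (b z : ℂ) : ℂ :=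
  ∑' n : ℕ, (1 / risingFac b n) * z ^ n / (n.factorial : ℂ)

/-!
Put `b = 2p + 1`, `u = iκ`, `S(z) = e^{uz} (M(m, b, -2uz) + M(m+1, b, -2uz)) / 2` and
`T(z) = z e^{uz} M(m+1, b+1, -2uz) / b`. Substituting into the recurrence shows that
`(S - κ₃ T, κ₁ T)` solves it as soon as the Taylor coefficients satisfy `(b + n) tₙ₊₁ = sₙ` and
`(n+1)(b+n+1) tₙ₊₂ + σ tₙ₊₁ + det P · tₙ = 0`; the recurrence has only one solution, so these are
the coefficients of `A` and `B`. Both relations are identities of formal power series. The first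
comes from the contiguous relations `b (M(a+1, b) - M(a, b)) = z M(a+1, b+1)` and
`b M(a, b) = (b + z d/dz) M(a, b+1)`. For the second, Kummer's equation and the Leibniz rule give
`z w'' + b w' + u (2a - b) w - u² z w = 0` for `w = e^{uz} M(a, b, -2uz)`; with `a = m + 1` the
middle coefficient is `u (2m - b + 1) = σ`, which is what the choice of `m` is for, and
`u² = -det P`. Cauchy products turn the coefficient identities into identities of entire functions.
-/

open PowerSeries

theorem risingFac_succ_eq_mul (x : ℂ) (n : ℕ) :
    risingFac x (n + 1) = x * risingFac (x + 1) n := by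
  induction n with
  | zero => simp [risingFac]
  | succ n ih =>
    rw [risingFac, ih, risingFac]
    push_cast
    ring

theorem risingFac_add_one_succ_sub (a : ℂ) (n : ℕ) :
    risingFac (a + 1) (n + 1) - risingFac a (n + 1) = (n + 1) * risingFac (a + 1) n := by
  rw [risingFac_succ_eq_mul a n]
  simp only [risingFac]
  ring

theorem risingFac_ne_zero {b : ℂ} (hb : ∀ k : ℕ, b + k ≠ 0) (n : ℕ) : risingFac b n ≠ 0 := by
  induction n with
  | zero => simp [risingFac]
  | succ n ih => exact mul_ne_zero ih (hb n)

theorem add_one_add_natCast_ne_zero {b : ℂ} (hb : ∀ k : ℕ, b + k ≠ 0) (k : ℕ) :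
    b + 1 + k ≠ 0 := by
  simpa [add_assoc, add_comm (1 : ℂ)] using hb (k + 1)

theorem coeff_X_mul_derivative {R : Type*} [CommSemiring R] (f : R⟦X⟧) (n : ℕ) :
    coeff n (X * d⁄dX R f) = n * coeff n f := by
  rcases n with _ | n
  · simp
  · rw [coeff_succ_X_mul, coeff_derivative]
    push_cast
    ring

theorem coeff_rescale_exp (u : ℂ) (n : ℕ) :
    coeff n (rescale u (exp ℂ)) = u ^ n / n.factorial := by
  simp [coeff_rescale, coeff_exp, div_eq_mul_inv]

theorem derivative_rescale_exp (u : ℂ) :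
    d⁄dX ℂ (rescale u (exp ℂ)) = C u * rescale u (exp ℂ) := by
  ext n
  rw [coeff_derivative, coeff_C_mul, coeff_rescale_exp, coeff_rescale_exp, Nat.factorial_succ]
  push_cast
  field_simp
  ring

def kummerSeries (a b c : ℂ) : ℂ⟦X⟧ :=
  mk fun n => risingFac a n / risingFac b n * c ^ n / n.factorial

section Kummer

variable (a : ℂ) {b : ℂ} (c : ℂ) (hb : ∀ k : ℕ, b + k ≠ 0)
include hb

theorem coeff_kummerSeries_succ (n : ℕ) :
    coeff (n + 1) (kummerSeries a b c) * ((n + 1) * (b + n)) =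
      c * (a + n) * coeff n (kummerSeries a b c) := by
  have := risingFac_ne_zero hb n
  simp only [kummerSeries, coeff_mk, risingFac, Nat.factorial_succ]
  push_cast
  field_simp [hb n]
  ring

theorem kummerSeries_ode :
    X * d⁄dX ℂ (d⁄dX ℂ (kummerSeries a b c)) + (C b - C c * X) * d⁄dX ℂ (kummerSeries a b c)
      - C (a * c) * kummerSeries a b c = 0 := by
  ext n
  have h := coeff_kummerSeries_succ a c hb n
  simp only [map_sub, map_add, sub_mul, mul_assoc, coeff_X_mul_derivative, coeff_C_mul,
    coeff_derivative, map_zero]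
  linear_combination h

theorem kummerSeries_add_one_sub :
    C b * (kummerSeries (a + 1) b c - kummerSeries a b c) =
      C c * X * kummerSeries (a + 1) (b + 1) c := by
  ext n
  rw [coeff_C_mul, mul_assoc, coeff_C_mul]
  rcases n with _ | n
  · simp [kummerSeries, risingFac]
  · have := risingFac_ne_zero (add_one_add_natCast_ne_zero hb) n
    have : b ≠ 0 := by simpa using hb 0
    rw [coeff_succ_X_mul, map_sub]
    simp only [kummerSeries, coeff_mk, ← sub_div, ← sub_mul, risingFac_add_one_succ_sub,
      risingFac_succ_eq_mul b, Nat.factorial_succ]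
    push_cast
    field_simp
    ring

theorem kummerSeries_eq_add_derivative :
    C b * kummerSeries a b c =
      C b * kummerSeries a (b + 1) c + X * d⁄dX ℂ (kummerSeries a (b + 1) c) := by
  ext n
  have := risingFac_ne_zero hb n
  have := risingFac_ne_zero (add_one_add_natCast_ne_zero hb) n
  have : (n.factorial : ℂ) ≠ 0 := Nat.cast_ne_zero.2 n.factorial_ne_zero
  have hprod : risingFac b n * (b + n) = b * risingFac (b + 1) n := by
    rw [← risingFac_succ_eq_mul]; rfl
  rw [map_add, coeff_X_mul_derivative, coeff_C_mul, coeff_C_mul]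
  simp only [kummerSeries, coeff_mk]
  field_simp
  linear_combination (-(risingFac a n * c ^ n)) * hprod

end Kummer

def expKummerSeries (u a b : ℂ) : ℂ⟦X⟧ := rescale u (exp ℂ) * kummerSeries a b (-2 * u)

theorem coeff_zero_expKummerSeries (u a b : ℂ) : coeff 0 (expKummerSeries u a b) = 1 := by
  simp [expKummerSeries, coeff_mul, kummerSeries, risingFac]

section ExpKummer

variable (u a : ℂ) {b : ℂ} (hb : ∀ k : ℕ, b + k ≠ 0)
include hb

theorem expKummerSeries_ode :
    X * d⁄dX ℂ (d⁄dX ℂ (expKummerSeries u a b)) + C b * d⁄dX ℂ (expKummerSeries u a b)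
      + C (u * (2 * a - b)) * expKummerSeries u a b - C (u ^ 2) * (X * expKummerSeries u a b)
      = 0 := by
  have hK := kummerSeries_ode a (-2 * u) hb
  simp only [expKummerSeries, Derivation.leibniz, map_add, smul_eq_mul, derivative_rescale_exp,
    derivative_C, mul_zero, map_mul, map_sub, map_neg, map_ofNat, map_pow] at hK ⊢
  linear_combination rescale u (exp ℂ) * hK

theorem coeff_expKummerSeries_recurrence (n : ℕ) :
    (n + 1) * (b + n) * coeff (n + 1) (expKummerSeries u a b)
      + u * (2 * a - b) * coeff n (expKummerSeries u a b)
      - u ^ 2 * coeff n (X * expKummerSeries u a b) = 0 := by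
  have h := congrArg (coeff n) (expKummerSeries_ode u a hb)
  simp only [map_sub, map_add, coeff_X_mul_derivative, coeff_C_mul, coeff_derivative,
    map_zero] at h
  linear_combination h

theorem expKummerSeries_contiguous :
    C b * (expKummerSeries u a b + expKummerSeries u (a + 1) b) =
      C 2 * (X * d⁄dX ℂ (expKummerSeries u (a + 1) (b + 1))
        + C b * expKummerSeries u (a + 1) (b + 1)) := by
  have hsub := kummerSeries_add_one_sub a (-2 * u) hb
  have hder := kummerSeries_eq_add_derivative (a + 1) (-2 * u) hb
  simp only [expKummerSeries, Derivation.leibniz, smul_eq_mul, derivative_rescale_exp, map_mul,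
    map_neg, map_ofNat] at hsub ⊢
  linear_combination rescale u (exp ℂ) * (2 * hder - hsub)

theorem coeff_expKummerSeries_contiguous (n : ℕ) :
    b * (coeff n (expKummerSeries u a b) + coeff n (expKummerSeries u (a + 1) b)) =
      2 * (b + n) * coeff n (expKummerSeries u (a + 1) (b + 1)) := by
  have h := congrArg (coeff n) (expKummerSeries_contiguous u a hb)
  simp only [map_add, coeff_C_mul, coeff_X_mul_derivative] at h
  linear_combination h

end ExpKummer

theorem summable_norm_coeff_kummerSeries_mul_pow (a b c z : ℂ) :
    Summable fun n => ‖coeff n (kummerSeries a b c) * z ^ n‖ := by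
  set r : ℕ → ℂ := fun n => (a + n) / (b + n) * (c * z / (1 + n))
  have hr : Tendsto r atTop (nhds 0) := by
    simpa using (tendsto_add_mul_div_add_mul_atTop_nhds a b 1 one_ne_zero).mul
      (tendsto_add_mul_div_add_mul_atTop_nhds (c * z) 1 0 one_ne_zero)
  have hsmall : ∀ᶠ n in atTop, ‖r n‖ < 1 / 2 :=
    (tendsto_norm_zero.comp hr).eventually (gt_mem_nhds (by norm_num : (0 : ℝ) < 1 / 2))
  refine summable_of_ratio_norm_eventually_le (r := 1 / 2) (by norm_num) ?_
  filter_upwards [hsmall] with n hn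
  have hstep : coeff (n + 1) (kummerSeries a b c) * z ^ (n + 1) =
      coeff n (kummerSeries a b c) * z ^ n * r n := by
    simp only [kummerSeries, coeff_mk, risingFac, Nat.factorial_succ, r, Nat.cast_mul,
      div_eq_mul_inv, mul_inv]
    push_cast
    ring
  rw [norm_norm, norm_norm, hstep, norm_mul, mul_comm]
  exact mul_le_mul_of_nonneg_right hn.le (norm_nonneg _)

theorem hasSum_coeff_kummerSeries_mul_pow (a b c z : ℂ) :
    HasSum (fun n => coeff n (kummerSeries a b c) * z ^ n) (kummerM a b (c * z)) := by
  have hterm : (fun n => coeff n (kummerSeries a b c) * z ^ n) =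
      fun n => risingFac a n / risingFac b n * (c * z) ^ n / n.factorial := by
    funext n
    simp only [kummerSeries, coeff_mk]
    ring
  rw [kummerM, ← hterm]
  exact (summable_norm_coeff_kummerSeries_mul_pow a b c z).of_norm.hasSum

theorem summable_norm_coeff_rescale_exp_mul_pow (u z : ℂ) :
    Summable fun n => ‖coeff n (rescale u (exp ℂ)) * z ^ n‖ := by
  refine (Real.summable_pow_div_factorial ‖u * z‖).congr fun n => ?_
  rw [coeff_rescale_exp]
  simp only [norm_mul, norm_div, norm_pow, Complex.norm_natCast, mul_pow]
  ring

theorem hasSum_coeff_rescale_exp_mul_pow (u z : ℂ) :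
    HasSum (fun n => coeff n (rescale u (exp ℂ)) * z ^ n) (Complex.exp (u * z)) := by
  rw [Complex.exp_eq_exp_ℂ]
  refine (NormedSpace.expSeries_div_hasSum_exp (u * z)).congr_fun fun n => ?_
  rw [coeff_rescale_exp]
  ring

theorem hasSum_coeff_mul_mul_pow {f g : ℂ⟦X⟧} {z v w : ℂ}
    (hf : HasSum (fun n => coeff n f * z ^ n) v) (hg : HasSum (fun n => coeff n g * z ^ n) w)
    (hf' : Summable fun n => ‖coeff n f * z ^ n‖) (hg' : Summable fun n => ‖coeff n g * z ^ n‖) :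
    HasSum (fun n => coeff n (f * g) * z ^ n) (v * w) := by
  rw [← hf.tsum_eq, ← hg.tsum_eq, tsum_mul_tsum_eq_tsum_sum_antidiagonal_of_summable_norm hf' hg']
  refine (summable_norm_sum_mul_antidiagonal_of_summable_norm hf' hg').of_norm.hasSum.congr_fun
    fun n => ?_
  rw [coeff_mul, Finset.sum_mul]
  refine Finset.sum_congr rfl fun kl hkl => ?_
  rw [← Finset.HasAntidiagonal.mem_antidiagonal.1 hkl, pow_add]
  ring

theorem hasSum_coeff_X_mul_mul_pow {f : ℂ⟦X⟧} {z v : ℂ}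
    (hf : HasSum (fun n => coeff n f * z ^ n) v) :
    HasSum (fun n => coeff n (X * f) * z ^ n) (z * v) := by
  rw [← hasSum_nat_add_iff' 1]
  simp only [coeff_succ_X_mul, Finset.range_one, Finset.sum_singleton, coeff_zero_X_mul, zero_mul,
    sub_zero]
  exact (hf.mul_left z).congr_fun fun n => by ring

theorem hasSum_coeff_expKummerSeries_mul_pow (u a b z : ℂ) :
    HasSum (fun n => coeff n (expKummerSeries u a b) * z ^ n)
      (Complex.exp (u * z) * kummerM a b (-2 * u * z)) :=
  hasSum_coeff_mul_mul_pow (hasSum_coeff_rescale_exp_mul_pow u z)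
    (hasSum_coeff_kummerSeries_mul_pow a b (-2 * u) z)
    (summable_norm_coeff_rescale_exp_mul_pow u z)
    (summable_norm_coeff_kummerSeries_mul_pow a b (-2 * u) z)

/-- The generating functions are `A = S - κ₃ T` and `B = κ₁ T` with `b = 2p + 1` and `u = iκ`. -/
def xiSeriesS (b m u : ℂ) : ℂ⟦X⟧ :=
  C (1 / 2) * (expKummerSeries u m b + expKummerSeries u (m + 1) b)

def xiSeriesT (b m u : ℂ) : ℂ⟦X⟧ := C b⁻¹ * (X * expKummerSeries u (m + 1) (b + 1))

section XiSeries

variable (b m u : ℂ)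

theorem coeff_zero_xiSeriesS : coeff 0 (xiSeriesS b m u) = 1 := by
  simp only [xiSeriesS, coeff_C_mul, map_add, coeff_zero_expKummerSeries]
  norm_num

theorem coeff_zero_xiSeriesT : coeff 0 (xiSeriesT b m u) = 0 := by
  simp [xiSeriesT]

theorem hasSum_coeff_xiSeriesS_mul_pow (z : ℂ) :
    HasSum (fun n => coeff n (xiSeriesS b m u) * z ^ n)
      (Complex.exp (u * z) * (kummerM m b (-2 * u * z) + kummerM (m + 1) b (-2 * u * z)) / 2) := by
  rw [mul_add]
  refine (((hasSum_coeff_expKummerSeries_mul_pow u m b z).add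
    (hasSum_coeff_expKummerSeries_mul_pow u (m + 1) b z)).div_const 2).congr_fun fun n => ?_
  simp only [xiSeriesS, coeff_C_mul, map_add]
  ring

theorem hasSum_coeff_xiSeriesT_mul_pow (z : ℂ) :
    HasSum (fun n => coeff n (xiSeriesT b m u) * z ^ n)
      (z * Complex.exp (u * z) * kummerM (m + 1) (b + 1) (-2 * u * z) / b) := by
  rw [mul_assoc z]
  refine ((hasSum_coeff_X_mul_mul_pow
    (hasSum_coeff_expKummerSeries_mul_pow u (m + 1) (b + 1) z)).div_const b).congr_fun fun n => ?_
  simp only [xiSeriesT, coeff_C_mul]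
  ring

variable {b} (hb : ∀ k : ℕ, b + k ≠ 0)
include hb

theorem coeff_succ_xiSeriesT (n : ℕ) :
    (b + n) * coeff (n + 1) (xiSeriesT b m u) = coeff n (xiSeriesS b m u) := by
  have h := coeff_expKummerSeries_contiguous u m hb n
  have hbb : b⁻¹ * b = 1 := inv_mul_cancel₀ (by simpa using hb 0)
  simp only [xiSeriesT, xiSeriesS, coeff_C_mul, coeff_succ_X_mul, map_add]
  linear_combination -(b⁻¹ / 2) * h +
    ((coeff n (expKummerSeries u m b) + coeff n (expKummerSeries u (m + 1) b)) / 2) * hbb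

theorem xiSeriesT_recurrence (n : ℕ) :
    (n + 1) * (b + (n + 1)) * coeff (n + 2) (xiSeriesT b m u)
      + u * (2 * m - b + 1) * coeff (n + 1) (xiSeriesT b m u)
      - u ^ 2 * coeff n (xiSeriesT b m u) = 0 := by
  have h := coeff_expKummerSeries_recurrence u (m + 1) (add_one_add_natCast_ne_zero hb) n
  simp only [xiSeriesT, coeff_C_mul, coeff_succ_X_mul]
  linear_combination b⁻¹ * h

end XiSeries

section Recurrence

variable {p κ1 κ2 κ3 ψ : ℝ} {α β : ℕ → ℝ}

theorem SatRec.mul_succ (h : SatRec p !![κ1, κ3; κ3, κ2] ψ α β) (n : ℕ) (hn : 2 * p + 1 + n ≠ 0) :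
    (n + 1) * (2 * p + 1 + n) * α (n + 1) =
        -(α n * (κ3 * (2 * p + 1 + n) - κ1 * ψ) + β n * (κ2 * (2 * p + 1 + n) - κ3 * ψ)) ∧
      (2 * p + 1 + n) * β (n + 1) = κ1 * α n + κ3 * β n := by
  have hα : α (n + 1) = -1 / ((n + 1) * (2 * p + n + 1)) *
      (α n * (κ3 * (2 * p + n + 1) - κ1 * ψ) + β n * (κ2 * (2 * p + n + 1) - κ3 * ψ)) := by
    simpa [matJ, sub_eq_add_neg] using congrFun (congrFun (h.2.2 n) 0) 0
  have hβ : β (n + 1) = -1 / ((n + 1) * (2 * p + n + 1)) *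
      (-(α n * (κ1 * (n + 1))) - β n * (κ3 * (n + 1))) := by
    simpa [matJ, sub_eq_add_neg] using congrFun (congrFun (h.2.2 n) 0) 1
  have hn1 : (n + 1 : ℝ) ≠ 0 := n.cast_add_one_ne_zero
  have hn' : 2 * p + n + 1 ≠ 0 := by rwa [add_right_comm]
  constructor
  · rw [hα]
    field_simp
    ring
  · rw [hβ]
    field_simp
    ring

theorem SatRec.coe_eq_of_recurrence (h : SatRec p !![κ1, κ3; κ3, κ2] ψ α β)
    (hp : ∀ k : ℕ, 2 * p + 1 + k ≠ 0) {s t : ℕ → ℂ} (hs0 : s 0 = 1) (ht0 : t 0 = 0)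
    (hst : ∀ n : ℕ, (2 * p + 1 + n) * t (n + 1) = s n)
    (ht : ∀ n : ℕ, (n + 1) * (2 * p + 1 + (n + 1)) * t (n + 2) + (2 * p * κ3 - ψ * κ1) * t (n + 1)
      - (κ3 ^ 2 - κ1 * κ2) * t n = 0) (n : ℕ) :
    (α n : ℂ) = s n - κ3 * t n ∧ (β n : ℂ) = κ1 * t n := by
  induction n with
  | zero => simp [h.1, h.2.1, hs0, ht0]
  | succ n ih =>
    obtain ⟨hα, hβ⟩ := SatRec.mul_succ h n (hp n)
    have hpn : (2 * p + 1 + n : ℂ) ≠ 0 := by exact_mod_cast hp n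
    have hn : (n + 1 : ℂ) ≠ 0 := n.cast_add_one_ne_zero
    have hα' := congrArg (fun x : ℝ => (x : ℂ)) hα
    have hβ' := congrArg (fun x : ℝ => (x : ℂ)) hβ
    have hs1 := hst (n + 1)
    push_cast at hα' hβ' hs1
    rw [ih.1, ih.2] at hα' hβ'
    constructor
    · refine mul_left_cancel₀ (mul_ne_zero hn hpn) ?_
      linear_combination hα' + (n + 1) * (2 * p + 1 + n) * hs1 - (2 * p + 1 + n) * ht n
        + (κ3 * (2 * p + 1 + n) - κ1 * ψ) * hst n
    · refine mul_left_cancel₀ hpn ?_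
      linear_combination hβ' - κ1 * hst n

theorem SatRec.coe_eq_coeff_xiSeries (h : SatRec p !![κ1, κ3; κ3, κ2] ψ α β)
    (hp : ∀ k : ℕ, 2 * p + 1 + k ≠ 0) {m u : ℂ} (hu : u ^ 2 = κ3 ^ 2 - κ1 * κ2)
    (hum : u * (2 * m - (2 * p + 1) + 1) = 2 * p * κ3 - ψ * κ1) (n : ℕ) :
    (α n : ℂ) = coeff n (xiSeriesS (2 * p + 1) m u) - κ3 * coeff n (xiSeriesT (2 * p + 1) m u) ∧
      (β n : ℂ) = κ1 * coeff n (xiSeriesT (2 * p + 1) m u) := by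
  have hb : ∀ k : ℕ, 2 * (p : ℂ) + 1 + k ≠ 0 := fun k => by exact_mod_cast hp k
  refine SatRec.coe_eq_of_recurrence h hp (s := fun n => coeff n (xiSeriesS (2 * p + 1) m u))
    (t := fun n => coeff n (xiSeriesT (2 * p + 1) m u)) (coeff_zero_xiSeriesS _ m u)
    (coeff_zero_xiSeriesT _ m u) (coeff_succ_xiSeriesT m u hb) (fun n => ?_) n
  rw [← hum, ← hu]
  exact xiSeriesT_recurrence m u hb n

end Recurrence

/-- explicit formulae for (A,B) = Ξₚ(P,ψ) in terms of Kummer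
functions when det P ≠ 0. -/
theorem statement13 (p : ℝ) (hp : ∀ k : ℕ, p ≠ -((k : ℝ) + 1) / 2)
    (κ1 κ2 κ3 ψ : ℝ)
    (hdet : (!![κ1, κ3; κ3, κ2] : Matrix (Fin 2) (Fin 2) ℝ).det ≠ 0)
    (κ : ℂ) (hκ : κ ^ 2 = ((!![κ1, κ3; κ3, κ2] : Matrix (Fin 2) (Fin 2) ℝ).det : ℂ))
    (σ : ℝ) (hσ : σ = 2 * p * κ3 - ψ * κ1)
    (m : ℂ) (hm : m = (σ : ℂ) / (2 * Complex.I * κ) + (p : ℂ))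
    (al bt : ℕ → ℝ) (hrec : SatRec p !![κ1, κ3; κ3, κ2] ψ al bt)
    (A B : ℂ → ℂ)
    (hA : ∀ z : ℂ, HasSum (fun n : ℕ => (al n : ℂ) * z ^ n) (A z))
    (hB : ∀ z : ℂ, HasSum (fun n : ℕ => (bt n : ℂ) * z ^ n) (B z)) :
    ∀ z : ℂ,
      A z = Complex.exp (Complex.I * κ * z) *
        ((1/2) * kummerM m (2 * (p : ℂ) + 1) (-2 * Complex.I * κ * z)
          + (1/2) * kummerM (m + 1) (2 * (p : ℂ) + 1) (-2 * Complex.I * κ * z)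
          - (κ3 : ℂ) / (2 * (p : ℂ) + 1) * z *
              kummerM (m + 1) (2 * (p : ℂ) + 2) (-2 * Complex.I * κ * z)) ∧
      B z = Complex.exp (Complex.I * κ * z) * (κ1 : ℂ) / (2 * (p : ℂ) + 1) * z *
              kummerM (m + 1) (2 * (p : ℂ) + 2) (-2 * Complex.I * κ * z) := by
  have hpR : ∀ k : ℕ, 2 * p + 1 + k ≠ 0 := fun k h => hp k (by linarith)
  have hκ0 : κ ≠ 0 := by
    rintro rfl
    exact hdet (by exact_mod_cast hκ.symm.trans (zero_pow two_ne_zero))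
  have hu : (Complex.I * κ) ^ 2 = κ3 ^ 2 - κ1 * κ2 := by
    rw [mul_pow, Complex.I_sq, hκ, Matrix.det_fin_two_of]
    push_cast
    ring
  have hum : Complex.I * κ * (2 * m - (2 * p + 1) + 1) = 2 * p * κ3 - ψ * κ1 := by
    rw [hm, hσ]
    field_simp
    push_cast
    ring
  have hcoeff := SatRec.coe_eq_coeff_xiSeries hrec hpR hu hum
  intro z
  have hS := hasSum_coeff_xiSeriesS_mul_pow (2 * p + 1) m (Complex.I * κ) z
  have hT := hasSum_coeff_xiSeriesT_mul_pow (2 * p + 1) m (Complex.I * κ) z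
  have hA' := (hS.sub (hT.mul_left (κ3 : ℂ))).congr_fun (g := fun n => (al n : ℂ) * z ^ n)
    fun n => by rw [(hcoeff n).1]; ring
  have hB' := (hT.mul_left (κ1 : ℂ)).congr_fun (g := fun n => (bt n : ℂ) * z ^ n)
    fun n => by rw [(hcoeff n).2]; ring
  rw [(hA z).unique hA', (hB z).unique hB']
  constructor <;> ring_nf
end
end

section
/- Let p ∈ ℝ with p ∉ {−(k+1)/2 : k ∈ ℕ₀}, let P = [[κ₁,κ₃],[κ₃,κ₂]] be a real symmetric 2×2 matrix with det P = 0, and let ψ ∈ ℝ. Set σ := 2p·κ₃ − ψ·κ₁, and let (A,B) = Ξₚ(P,ψ). Then for all z ∈ ℂ: A(z) = ₀F₁(2p+1, −σz) − (κ₃/(2p+1))·z·₀F₁(2p+2, −σz) and B(z) = (κ₁/(2p+1))·z·₀F₁(2p+2, −σz). -/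
open Matrix MeasureTheory Filter

noncomputable section

/-!
With `cₙ = 1 / ((2p+1)ₙ n!)` and `s = -σ`, the sequences
`αₙ = cₙ (sⁿ - κ₃ n sⁿ⁻¹)`, `βₙ = cₙ κ₁ n sⁿ⁻¹` satisfy the recurrence: because `det P = 0`,
the row `(αₙ, βₙ) P` collapses to `cₙ sⁿ (κ₁, κ₃)`, and what remains is the ratio
`cₙ₊₁ / cₙ = 1 / ((2p+1+n)(n+1))`. The recurrence has only one solution, so these are the
coefficients of `A` and `B`. The series `∑ cₙ sⁿ zⁿ` is `₀F₁(2p+1, sz)`, and `(b)ₙ₊₁ = b (b+1)ₙ`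
turns `∑ cₙ n sⁿ⁻¹ zⁿ` into `z ₀F₁(2p+2, sz) / (2p+1)`.
-/

open Polynomial Filter Topology Nat

lemma risingFac_ofReal (b : ℝ) (n : ℕ) :
    risingFac (b : ℂ) n = (((ascPochhammer ℝ n).eval b : ℝ) : ℂ) := by
  induction n with
  | zero => simp [risingFac]
  | succ n ih => simp [risingFac, ih, ascPochhammer_succ_eval]

lemma ascPochhammer_eval_ne_zero {S : Type*} [Semiring S] [NoZeroDivisors S] [Nontrivial S]
    {b : S} (hb : ∀ k : ℕ, b + k ≠ 0) (n : ℕ) : (ascPochhammer S n).eval b ≠ 0 := by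
  induction n with
  | zero => simp
  | succ n ih => rw [ascPochhammer_succ_eval]; exact mul_ne_zero ih (hb n)

def hyp0F1Coeff (b : ℝ) (n : ℕ) : ℝ := ((ascPochhammer ℝ n).eval b * n !)⁻¹

lemma hyp0F1Coeff_succ (b : ℝ) (n : ℕ) :
    hyp0F1Coeff b (n + 1) = hyp0F1Coeff b n * (b + n)⁻¹ * ((n : ℝ) + 1)⁻¹ := by
  simp only [hyp0F1Coeff, ascPochhammer_succ_eval, factorial_succ, cast_mul, mul_inv]
  push_cast
  ring

lemma hyp0F1Coeff_param_add_one {b : ℝ} (hb : b ≠ 0) (n : ℕ) :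
    hyp0F1Coeff (b + 1) n = b * (n + 1) * hyp0F1Coeff b (n + 1) := by
  have hn : (n + 1 : ℝ) ≠ 0 := n.cast_add_one_ne_zero
  simp only [hyp0F1Coeff, ascPochhammer_succ_left, eval_mul, eval_X, eval_comp, eval_add,
    eval_one, factorial_succ, cast_mul, mul_inv]
  push_cast
  field_simp

lemma hyp0F1Coeff_ne_zero {b : ℝ} (hb : ∀ k : ℕ, b + k ≠ 0) (n : ℕ) : hyp0F1Coeff b n ≠ 0 :=
  inv_ne_zero (mul_ne_zero (ascPochhammer_eval_ne_zero hb n) (by positivity))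

lemma summable_hyp0F1Coeff_mul_pow {b : ℝ} (hb : ∀ k : ℕ, b + k ≠ 0) (w : ℂ) :
    Summable fun n ↦ (hyp0F1Coeff b n : ℂ) * w ^ n := by
  set c : ℕ → ℂ := fun n ↦ hyp0F1Coeff b n
  have hratio : Tendsto (fun n ↦ ‖c n.succ‖ / ‖c n‖) atTop (𝓝 0) := by
    have hgrow : Tendsto (fun n : ℕ ↦ (b + n) * (n + 1)) atTop atTop :=
      (tendsto_atTop_add_const_left _ b tendsto_natCast_atTop_atTop).atTop_mul_atTop₀
        (tendsto_atTop_add_const_right _ 1 tendsto_natCast_atTop_atTop)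
    convert hgrow.inv_tendsto_atTop.abs using 1
    · ext n
      have := hyp0F1Coeff_ne_zero hb n
      simp only [c, Complex.norm_real, Real.norm_eq_abs, hyp0F1Coeff_succ, abs_mul, Pi.inv_apply,
        mul_inv]
      field_simp
    · simp
  have hr := FormalMultilinearSeries.ofScalars_radius_eq_top_of_tendsto ℂ c
    (.of_forall fun n ↦ Complex.ofReal_ne_zero.mpr (hyp0F1Coeff_ne_zero hb n)) hratio
  refine ((FormalMultilinearSeries.ofScalars ℂ c).summable_norm_apply (x := w)
    (by simp [hr])).of_norm.congr fun n ↦ ?_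
  simp [c, mul_comm]

lemma hasSum_hyp0F1 {b : ℝ} (hb : ∀ k : ℕ, b + k ≠ 0) (w : ℂ) :
    HasSum (fun n ↦ (hyp0F1Coeff b n : ℂ) * w ^ n) (hyp0F1 b w) := by
  convert (summable_hyp0F1Coeff_mul_pow hb w).hasSum using 1
  refine tsum_congr fun n ↦ ?_
  simp [risingFac_ofReal, hyp0F1Coeff]
  ring

-- Termwise `z • ∂ₛ ₀F₁(b, s z)`; the factor `n` makes the truncated `n - 1` harmless.
lemma hasSum_mul_hyp0F1_add_one {b : ℝ} (hb : ∀ k : ℕ, b + k ≠ 0) (s : ℝ) (z : ℂ) :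
    HasSum (fun n ↦ ((hyp0F1Coeff b n * n * s ^ (n - 1) : ℝ) : ℂ) * z ^ n)
      (z * hyp0F1 (b + 1 : ℝ) (s * z) / b) := by
  have hb' : ∀ k : ℕ, b + 1 + k ≠ 0 := fun k ↦ by
    convert hb (k + 1) using 1; push_cast; ring
  have hb0 : b ≠ 0 := by simpa using hb 0
  have hb0ℂ : (b : ℂ) ≠ 0 := Complex.ofReal_ne_zero.mpr hb0
  have hshift (n : ℕ) : ((hyp0F1Coeff b (n + 1) * (n + 1 : ℕ) * s ^ (n + 1 - 1) : ℝ) : ℂ) *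
      z ^ (n + 1) = z / b * ((hyp0F1Coeff (b + 1) n : ℂ) * (s * z) ^ n) := by
    rw [hyp0F1Coeff_param_add_one hb0]
    push_cast
    field_simp
    ring
  rw [← hasSum_nat_add_iff' 1, show z * hyp0F1 (b + 1 : ℝ) (s * z) / b -
    ∑ i ∈ Finset.range 1, ((hyp0F1Coeff b i * i * s ^ (i - 1) : ℝ) : ℂ) * z ^ i =
      z / b * hyp0F1 (b + 1 : ℝ) (s * z) by simp; ring]
  exact ((hasSum_hyp0F1 hb' (s * z)).mul_left (z / b)).congr_fun hshift

lemma SatRec.unique {p ψ : ℝ} {P : Matrix (Fin 2) (Fin 2) ℝ} {α β α' β' : ℕ → ℝ}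
    (h : SatRec p P ψ α β) (h' : SatRec p P ψ α' β') : α = α' ∧ β = β' := by
  suffices ∀ n, α n = α' n ∧ β n = β' n from
    ⟨funext fun n ↦ (this n).1, funext fun n ↦ (this n).2⟩
  intro n
  induction n with
  | zero => exact ⟨h.1.trans h'.1.symm, h.2.1.trans h'.2.1.symm⟩
  | succ n ih =>
    have hrow : !![α (n + 1), β (n + 1)] = !![α' (n + 1), β' (n + 1)] := by
      rw [h.2.2 n, h'.2.2 n, ih.1, ih.2]
    exact ⟨by simpa using congrFun (congrFun hrow 0) 0, by simpa using congrFun (congrFun hrow 0) 1⟩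

lemma satRec_hyp0F1Coeff {p κ1 κ2 κ3 ψ σ : ℝ}
    (hdet : (!![κ1, κ3; κ3, κ2] : Matrix (Fin 2) (Fin 2) ℝ).det = 0)
    (hσ : σ = 2 * p * κ3 - ψ * κ1) :
    SatRec p !![κ1, κ3; κ3, κ2] ψ
      (fun n ↦ hyp0F1Coeff (2 * p + 1) n * ((-σ) ^ n - κ3 * n * (-σ) ^ (n - 1)))
      (fun n ↦ hyp0F1Coeff (2 * p + 1) n * (κ1 * n * (-σ) ^ (n - 1))) := by
  rw [Matrix.det_fin_two_of] at hdet
  set c := hyp0F1Coeff (2 * p + 1)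
  refine ⟨by simp [c, hyp0F1Coeff], by simp, fun n ↦ ?_⟩
  have hrowP : !![c n * ((-σ) ^ n - κ3 * n * (-σ) ^ (n - 1)), c n * (κ1 * n * (-σ) ^ (n - 1))] *
      !![κ1, κ3; κ3, κ2] = (c n * (-σ) ^ n) • !![κ1, κ3] := by
    ext i j
    fin_cases i; fin_cases j
    · simp
      ring
    · simp
      linear_combination (c n * n * (-σ) ^ (n - 1)) * hdet
  rw [← Matrix.mul_assoc, ← Matrix.mul_assoc, hrowP]
  subst hσ
  ext i j
  fin_cases i; fin_cases j
  · simp [matJ, c, hyp0F1Coeff_succ, div_eq_mul_inv]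
    ring
  · simp [matJ, c, hyp0F1Coeff_succ, div_eq_mul_inv]
    ring

/-- explicit formulae for (A,B) = Ξₚ(P,ψ) in terms of ₀F₁ when
det P = 0. -/
theorem statement14 (p : ℝ) (hp : ∀ k : ℕ, p ≠ -((k : ℝ) + 1) / 2)
    (κ1 κ2 κ3 ψ : ℝ)
    (hdet : (!![κ1, κ3; κ3, κ2] : Matrix (Fin 2) (Fin 2) ℝ).det = 0)
    (σ : ℝ) (hσ : σ = 2 * p * κ3 - ψ * κ1)
    (al bt : ℕ → ℝ) (hrec : SatRec p !![κ1, κ3; κ3, κ2] ψ al bt)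
    (A B : ℂ → ℂ)
    (hA : ∀ z : ℂ, HasSum (fun n : ℕ => (al n : ℂ) * z ^ n) (A z))
    (hB : ∀ z : ℂ, HasSum (fun n : ℕ => (bt n : ℂ) * z ^ n) (B z)) :
    ∀ z : ℂ,
      A z = hyp0F1 (2 * (p : ℂ) + 1) (-(σ : ℂ) * z)
          - (κ3 : ℂ) / (2 * (p : ℂ) + 1) * z * hyp0F1 (2 * (p : ℂ) + 2) (-(σ : ℂ) * z) ∧
      B z = (κ1 : ℂ) / (2 * (p : ℂ) + 1) * z * hyp0F1 (2 * (p : ℂ) + 2) (-(σ : ℂ) * z) := by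
  have hb : ∀ k : ℕ, 2 * p + 1 + k ≠ 0 := fun k hk ↦ hp k (by linarith)
  obtain ⟨rfl, rfl⟩ := hrec.unique (satRec_hyp0F1Coeff hdet hσ)
  intro z
  have hE := hasSum_hyp0F1 hb (-σ * z)
  have hD := hasSum_mul_hyp0F1_add_one hb (-σ) z
  have hb1 : ((2 * p + 1 : ℝ) : ℂ) = 2 * p + 1 := by push_cast; ring
  have hb2 : ((2 * p + 1 + 1 : ℝ) : ℂ) = 2 * p + 2 := by push_cast; ring
  rw [hb1] at hE
  rw [hb1, hb2, Complex.ofReal_neg] at hD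
  constructor
  · rw [(hA z).unique ((hE.sub (hD.mul_left (κ3 : ℂ))).congr_fun fun n ↦ by push_cast; ring)]
    ring
  · rw [(hB z).unique ((hD.mul_left (κ1 : ℂ)).congr_fun fun n ↦ by push_cast; ring)]
    ring
end
end

section
/- Let p > −1/2 and let (P,ψ), (P̃,ψ̃) ∈ 𝒫ₚ with P = [[κ₁,κ₃],[κ₃,κ₂]] and P̃ = [[κ̃₁,κ̃₃],[κ̃₃,κ̃₂]]. Then there exists γ ∈ ℝ such that 𝒟_{ψ̃}(a)·P̃·𝒟_{ψ̃}(a)ᵀ = [[1,0],[γ,1]]·𝒟_ψ(a)·P·𝒟_ψ(a)ᵀ·[[1,γ],[0,1]] for all a ∈ (0,1), if and only if the following three conditions hold: κ₁ = κ̃₁, det P = det P̃, and ψ − ψ̃ = (2p/κ₁)·(κ₃ − κ̃₃). -/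
open Matrix MeasureTheory Filter

noncomputable section

/-- The parameter class 𝒫ₚ. -/
def PClass (p : ℝ) (P : Matrix (Fin 2) (Fin 2) ℝ) (ψ : ℝ) : Prop :=
  P.PosSemidef ∧
    ((p ≠ 0 ∧ P.mulVec ![1, 0] ≠ 0 ∧ P.mulVec ![-ψ, 2 * p] ≠ 0) ∨
     (p = 0 ∧ ((LinearMap.ker P.mulVecLin = ⊥ ∧ ψ = 0) ∨
               (P.mulVec ![1, 0] ≠ 0 ∧ ψ ≠ 0))))

/-!
Write `𝒟_ψ(a) = [[aᵖ, 0], [ψ b(a) / aᵖ, a⁻ᵖ]]`, where `b = boxCox (2p)` is `(a²ᵖ - 1)/(2p)`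
(and `log a` for `p = 0`). The shear `L_γ = [[1,0],[γ,1]]` intertwines `L_γ 𝒟_ψ = 𝒟_{ψ+2pγ} L_γ`,
so conjugating the Hamiltonian by `L_γ` is the same as replacing `(P, ψ)` by
`(L_γ P L_γᵀ, ψ + 2pγ)`; this gives the "if" direction. Conversely, the first row of
`𝒟_ψ(a) P 𝒟_ψ(a)ᵀ` is `(κ₁ a²ᵖ, κ₁ ψ b(a) + κ₃)` with `a²ᵖ = 1 + 2p b(a)`, and comparing it at two
points where `b` differs pins down `κ₁`, `κ₃ + γκ₁` and `ψ + 2pγ`, while the determinant is `det P`.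
-/

open scoped ComplexOrder in
theorem Matrix.PosSemidef.diag_pos_of_mulVec_single_ne_zero {n 𝕜 : Type*} [Fintype n]
    [DecidableEq n] [RCLike 𝕜] {A : Matrix n n 𝕜} (hA : A.PosSemidef) {i : n}
    (h : A *ᵥ Pi.single i 1 ≠ 0) : 0 < A i i := by
  refine hA.diag_nonneg.lt_of_ne fun h0 => h ?_
  rw [← hA.dotProduct_mulVec_zero_iff]
  simp [h0]

theorem PClass.mulVec_ne_zero {p ψ : ℝ} {P : Matrix (Fin 2) (Fin 2) ℝ} (h : PClass p P ψ) :
    P *ᵥ ![1, 0] ≠ 0 := by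
  rcases h.2 with ⟨-, h, -⟩ | ⟨-, ⟨hker, -⟩ | ⟨h, -⟩⟩
  · exact h
  · intro h0
    simpa using congrFun (Matrix.ker_mulVecLin_eq_bot_iff.mp hker _ h0) 0
  · exact h

theorem PClass.apply_zero_zero_pos {p ψ : ℝ} {P : Matrix (Fin 2) (Fin 2) ℝ} (h : PClass p P ψ) :
    0 < P 0 0 := by
  refine h.1.diag_pos_of_mulVec_single_ne_zero (i := 0) ?_
  convert h.mulVec_ne_zero
  ext i; fin_cases i <;> rfl

def boxCox (l a : ℝ) : ℝ := if l = 0 then Real.log a else (a ^ l - 1) / l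

theorem rpow_eq_one_add_mul_boxCox (l a : ℝ) : a ^ l = 1 + l * boxCox l a := by
  unfold boxCox
  split_ifs with h
  · simp [h]
  · field_simp; ring

theorem boxCox_injOn (l : ℝ) : Set.InjOn (boxCox l) (Set.Ioi 0) := by
  intro a (ha : 0 < a) b (hb : 0 < b) hab
  unfold boxCox at hab
  split_ifs at hab with h
  · exact Real.log_injOn_pos ha hb hab
  · refine Real.rpow_left_injOn h ha.le hb.le ?_
    field_simp at hab
    simpa using hab

theorem Dpsi_eq_of_pos (p ψ : ℝ) {a : ℝ} (ha : 0 < a) :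
    Dpsi p ψ a = !![a ^ p, 0; ψ * boxCox (2 * p) a / a ^ p, (a ^ p)⁻¹] := by
  have hs : a ^ p ≠ 0 := (Real.rpow_pos_of_pos ha p).ne'
  unfold Dpsi boxCox
  split_ifs with h h' h'
  · simp [h]
  · simp [h] at h'
  · simp [h] at h'
  · ext i j
    fin_cases i <;> fin_cases j <;> simp [Matrix.mul_apply, Fin.sum_univ_two, Real.rpow_neg ha.le]
    rw [mul_comm 2 p, Real.rpow_mul ha.le, Real.rpow_two]
    field_simp
    ring

theorem lowerShear_mul_Dpsi (p ψ γ a : ℝ) :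
    !![1, 0; γ, 1] * Dpsi p ψ a = Dpsi p (ψ + 2 * p * γ) a * !![1, 0; γ, 1] := by
  unfold Dpsi
  split_ifs with h
  · simp [h, add_comm]
  · ext i j
    fin_cases i <;> fin_cases j <;> simp [Matrix.mul_apply, Fin.sum_univ_two]
    field_simp
    ring

theorem HPpsi_lowerShear (p ψ γ a : ℝ) (P : Matrix (Fin 2) (Fin 2) ℝ) :
    HPpsi p (ψ + 2 * p * γ) (!![1, 0; γ, 1] * P * !![1, γ; 0, 1]) a =
      !![1, 0; γ, 1] * HPpsi p ψ P a * !![1, γ; 0, 1] := by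
  have hT : !![1, γ; 0, 1] = (!![1, 0; γ, 1] : Matrix (Fin 2) (Fin 2) ℝ)ᵀ := by
    ext i j; fin_cases i <;> fin_cases j <;> rfl
  rw [hT]
  unfold HPpsi
  calc _ = (Dpsi p (ψ + 2 * p * γ) a * !![1, 0; γ, 1]) * P *
        (Dpsi p (ψ + 2 * p * γ) a * !![1, 0; γ, 1])ᵀ := by
        simp only [transpose_mul, Matrix.mul_assoc]
    _ = (!![1, 0; γ, 1] * Dpsi p ψ a) * P * (!![1, 0; γ, 1] * Dpsi p ψ a)ᵀ := by
        rw [lowerShear_mul_Dpsi]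
    _ = _ := by simp only [transpose_mul, Matrix.mul_assoc]

theorem det_HPpsi (p ψ : ℝ) (P : Matrix (Fin 2) (Fin 2) ℝ) {a : ℝ} (ha : 0 < a) :
    (HPpsi p ψ P a).det = P.det := by
  have hs : a ^ p ≠ 0 := (Real.rpow_pos_of_pos ha p).ne'
  have hD : (Dpsi p ψ a).det = 1 := by
    rw [Dpsi_eq_of_pos p ψ ha, det_fin_two_of]
    field_simp
    ring
  simp [HPpsi, hD]

theorem HPpsi_apply_zero_zero (p ψ : ℝ) (P : Matrix (Fin 2) (Fin 2) ℝ) {a : ℝ} (ha : 0 < a) :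
    HPpsi p ψ P a 0 0 = P 0 0 * a ^ (2 * p) := by
  rw [mul_comm 2 p, Real.rpow_mul ha.le, Real.rpow_two]
  simp [HPpsi, Dpsi_eq_of_pos p ψ ha, Matrix.mul_apply, vecMul, dotProduct, Fin.sum_univ_two]
  ring

theorem HPpsi_apply_zero_one (p ψ : ℝ) (P : Matrix (Fin 2) (Fin 2) ℝ) {a : ℝ} (ha : 0 < a) :
    HPpsi p ψ P a 0 1 = P 0 0 * ψ * boxCox (2 * p) a + P 0 1 := by
  have hs : a ^ p ≠ 0 := (Real.rpow_pos_of_pos ha p).ne'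
  simp [HPpsi, Dpsi_eq_of_pos p ψ ha, Matrix.mul_apply, vecMul, dotProduct, Fin.sum_univ_two]
  field_simp

theorem eq_of_HPpsi_eq_lowerShear {p ψ φ γ : ℝ} {P Q : Matrix (Fin 2) (Fin 2) ℝ}
    (hP : P 0 0 ≠ 0)
    (h : ∀ a : ℝ, 0 < a → a < 1 →
      HPpsi p φ Q a = !![1, 0; γ, 1] * HPpsi p ψ P a * !![1, γ; 0, 1]) :
    Q 0 0 = P 0 0 ∧ Q 0 1 = P 0 1 + γ * P 0 0 ∧ φ = ψ + 2 * p * γ := by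
  have entries : ∀ a : ℝ, 0 < a → a < 1 →
      Q 0 0 * a ^ (2 * p) = P 0 0 * a ^ (2 * p) ∧
      Q 0 0 * φ * boxCox (2 * p) a + Q 0 1 =
        P 0 0 * ψ * boxCox (2 * p) a + P 0 1 + γ * (P 0 0 * a ^ (2 * p)) := by
    intro a ha ha1
    rw [← HPpsi_apply_zero_zero p φ Q ha, ← HPpsi_apply_zero_zero p ψ P ha,
      ← HPpsi_apply_zero_one p φ Q ha, ← HPpsi_apply_zero_one p ψ P ha, h a ha ha1]
    simp [Matrix.mul_apply, vecMul, dotProduct, Fin.sum_univ_two]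
    ring
  obtain ⟨h00, h01⟩ := entries (1 / 2) (by norm_num) (by norm_num)
  obtain ⟨-, h01'⟩ := entries (1 / 4) (by norm_num) (by norm_num)
  have hQ00 : Q 0 0 = P 0 0 :=
    mul_right_cancel₀ (Real.rpow_pos_of_pos (by norm_num) _).ne' h00
  rw [rpow_eq_one_add_mul_boxCox, hQ00] at h01 h01'
  have hb : boxCox (2 * p) (1 / 2) - boxCox (2 * p) (1 / 4) ≠ 0 := fun hb => by
    have := boxCox_injOn (2 * p) (by norm_num) (by norm_num) (sub_eq_zero.mp hb)
    norm_num at this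
  have hφ : φ = ψ + 2 * p * γ := by
    have key : P 0 0 * (boxCox (2 * p) (1 / 2) - boxCox (2 * p) (1 / 4)) *
        (φ - (ψ + 2 * p * γ)) = 0 := by
      linear_combination h01 - h01'
    exact sub_eq_zero.mp ((mul_eq_zero.mp key).resolve_left (mul_ne_zero hP hb))
  refine ⟨hQ00, ?_, hφ⟩
  rw [hφ] at h01
  linear_combination h01

theorem det_eq_of_HPpsi_eq_lowerShear {p ψ φ γ a : ℝ} {P Q : Matrix (Fin 2) (Fin 2) ℝ}
    (ha : 0 < a) (h : HPpsi p φ Q a = !![1, 0; γ, 1] * HPpsi p ψ P a * !![1, γ; 0, 1]) :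
    P.det = Q.det := by
  rw [← det_HPpsi p φ Q ha, h, det_mul, det_mul, det_HPpsi p ψ P ha]
  simp

theorem eq_lowerShear_conj_of_det_eq {κ1 κ2 κ3 κ2' γ : ℝ} (hκ1 : κ1 ≠ 0)
    (hdet : (!![κ1, κ3; κ3, κ2] : Matrix (Fin 2) (Fin 2) ℝ).det =
      (!![κ1, κ3 + γ * κ1; κ3 + γ * κ1, κ2'] : Matrix (Fin 2) (Fin 2) ℝ).det) :
    !![κ1, κ3 + γ * κ1; κ3 + γ * κ1, κ2'] =
      !![1, 0; γ, 1] * !![κ1, κ3; κ3, κ2] * !![1, γ; 0, 1] := by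
  have hκ2' : κ2' = κ2 + γ * (2 * κ3 + γ * κ1) := by
    rw [det_fin_two_of, det_fin_two_of] at hdet
    refine mul_left_cancel₀ hκ1 ?_
    linear_combination -hdet
  ext i j
  fin_cases i <;> fin_cases j <;> simp [Matrix.mul_apply, Fin.sum_univ_two, hκ2'] <;> ring

theorem statement17_general (p : ℝ)
    (κ1 κ2 κ3 ψ κ1t κ2t κ3t ψt : ℝ)
    (hP : PClass p !![κ1, κ3; κ3, κ2] ψ) :
    (∃ γ : ℝ, ∀ a : ℝ, 0 < a → a < 1 →
        HPpsi p ψt !![κ1t, κ3t; κ3t, κ2t] a =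
          !![1, 0; γ, 1] * HPpsi p ψ !![κ1, κ3; κ3, κ2] a * !![1, γ; 0, 1]) ↔
      (κ1 = κ1t ∧
        (!![κ1, κ3; κ3, κ2] : Matrix (Fin 2) (Fin 2) ℝ).det =
          (!![κ1t, κ3t; κ3t, κ2t] : Matrix (Fin 2) (Fin 2) ℝ).det ∧
        ψ - ψt = 2 * p / κ1 * (κ3 - κ3t)) := by
  have hκ1 : 0 < κ1 := hP.apply_zero_zero_pos
  constructor
  · rintro ⟨γ, hγ⟩
    obtain ⟨h1, h3, hψ⟩ := eq_of_HPpsi_eq_lowerShear (by simpa using hκ1.ne') hγ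
    have hdet :=
      det_eq_of_HPpsi_eq_lowerShear (by norm_num) (hγ (1 / 2) (by norm_num) (by norm_num))
    simp only [of_apply, cons_val', cons_val_zero, cons_val_one, empty_val', cons_val_fin_one]
      at h1 h3
    refine ⟨h1.symm, hdet, ?_⟩
    rw [hψ, h3]
    field_simp
    ring
  · rintro ⟨rfl, hdet, hψ⟩
    obtain ⟨γ, rfl⟩ : ∃ γ, κ3t = κ3 + γ * κ1 := ⟨(κ3t - κ3) / κ1, by field_simp; ring⟩
    have hψt : ψt = ψ + 2 * p * γ := by
      field_simp at hψ
      refine mul_left_cancel₀ hκ1.ne' ?_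
      linear_combination -hψ
    refine ⟨γ, fun a _ _ => ?_⟩
    rw [eq_lowerShear_conj_of_det_eq hκ1.ne' hdet, hψt, HPpsi_lowerShear]

/-- two parameters in 𝒫ₚ give Hamiltonians conjugate by a lower
triangular matrix [[1,0],[γ,1]] on (0,1) iff the three stated conditions hold. -/
theorem statement17 (p : ℝ) (hp : -(1/2 : ℝ) < p)
    (κ1 κ2 κ3 ψ κ1t κ2t κ3t ψt : ℝ)
    (hP : PClass p !![κ1, κ3; κ3, κ2] ψ)
    (hPt : PClass p !![κ1t, κ3t; κ3t, κ2t] ψt) :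
    (∃ γ : ℝ, ∀ a : ℝ, 0 < a → a < 1 →
        HPpsi p ψt !![κ1t, κ3t; κ3t, κ2t] a =
          !![1, 0; γ, 1] * HPpsi p ψ !![κ1, κ3; κ3, κ2] a * !![1, γ; 0, 1]) ↔
      (κ1 = κ1t ∧
        (!![κ1, κ3; κ3, κ2] : Matrix (Fin 2) (Fin 2) ℝ).det =
          (!![κ1t, κ3t; κ3t, κ2t] : Matrix (Fin 2) (Fin 2) ℝ).det ∧
        ψ - ψt = 2 * p / κ1 * (κ3 - κ3t)) :=
  statement17_general p κ1 κ2 κ3 ψ κ1t κ2t κ3t ψt hP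
end
end
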